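/- arXiv:1307.1922 — 6 statements merged into one kernel-verified Lean document; each statement's English description precedes it below -/
import Mathlib

section
/- Suppose the set R of positive integers has density 0, and let X(n) ∈ {0,1} denote its indicator function. Let (g_n)_{n≥1} be a bounded sequence of real numbers satisfying lim_{L→∞} (1/L) ∑_{M ≤ n < M+L} g_n = 0 uniformly in M. Then for any bounded sequence (f_k)_{k≥0} of real numbers and any non-increasing sequence of nonnegative weights w_1 ≥ w_2 ≥ w_3 ≥ ⋯ with ∑_n w_n = ∞, lim_{N→∞} (1/∑_{n<N} w_n) ∑_{n<N} w_n · f_{X(1)+X(2)+⋯+X(n)} · g_n = 0. -/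
open Filter Finset

private lemma abel_id (w S : ℕ → ℝ) (a : ℕ) :
    ∀ N, a ≤ N → ∑ n ∈ Ico a N, w n * (S (n+1) - S n)
      = w N * S N - w a * S a + ∑ n ∈ Ico a N, (w n - w (n+1)) * S (n+1) := by
  intro N hN
  induction N, hN using Nat.le_induction with
  | base => simp
  | succ N hN ih =>
      rw [Finset.sum_Ico_succ_top hN, Finset.sum_Ico_succ_top hN, ih]; ring

private lemma weighted_of_cesaro (h w : ℕ → ℝ)
    (hw0 : ∀ n, 0 ≤ w n) (hwa : Antitone w)
    (hW : Tendsto (fun N : ℕ => ∑ n ∈ Ico 1 N, w n) atTop atTop)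
    (hS : Tendsto (fun N : ℕ => (∑ n ∈ Ico 1 N, h n) / N) atTop (nhds 0)) :
    Tendsto (fun N : ℕ => (∑ n ∈ Ico 1 N, w n * h n) / (∑ n ∈ Ico 1 N, w n))
      atTop (nhds 0) := by
  rw [NormedAddCommGroup.tendsto_nhds_zero] at hS ⊢
  intro ε hε
  set S : ℕ → ℝ := fun n => ∑ m ∈ Ico 1 n, h m with hSdef
  have hε2 : 0 < ε/2 := by positivity
  obtain ⟨n₀', hn₀'⟩ := Filter.eventually_atTop.mp (hS (ε/2) hε2)
  set n₀ : ℕ := max n₀' 1 with hn₀def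
  have hn₀1 : 1 ≤ n₀ := le_max_right _ _
  have hSbound : ∀ n, n₀ ≤ n → |S n| ≤ ε/2 * n := by
    intro n hn
    have h1 : ‖S n / n‖ < ε/2 := hn₀' n (le_trans (le_max_left _ _) hn)
    have hnpos : (0:ℝ) < n := by
      exact_mod_cast Nat.lt_of_lt_of_le Nat.zero_lt_one (le_trans hn₀1 hn)
    rw [Real.norm_eq_abs, abs_div, abs_of_pos hnpos, div_lt_iff₀ hnpos] at h1
    linarith
  set B₀ : ℝ := ∑ n ∈ Ico 1 n₀, |w n * h n| with hB₀def
  have hB₀0 : 0 ≤ B₀ := Finset.sum_nonneg fun n _ => abs_nonneg _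
  set C₁ : ℝ := B₀ + ε * (w n₀ * n₀) with hC₁def
  have hC₁0 : 0 ≤ C₁ := by
    have : 0 ≤ w n₀ * n₀ := mul_nonneg (hw0 _) (Nat.cast_nonneg _)
    nlinarith
  -- key bound
  have key : ∀ N, n₀ ≤ N →
      |∑ n ∈ Ico 1 N, w n * h n| ≤ C₁ + ε/2 * ∑ n ∈ Ico 1 N, w n := by
    intro N hN
    have hsplit : ∑ n ∈ Ico 1 N, w n * h n
        = ∑ n ∈ Ico 1 n₀, w n * h n + ∑ n ∈ Ico n₀ N, w n * h n :=
      (Finset.sum_Ico_consecutive _ hn₀1 hN).symm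
    have hT : ∑ n ∈ Ico n₀ N, w n * h n
        = ∑ n ∈ Ico n₀ N, w n * (S (n+1) - S n) := by
      apply Finset.sum_congr rfl
      intro n hn
      have hn1 : 1 ≤ n := le_trans hn₀1 (Finset.mem_Ico.mp hn).1
      have : S (n+1) = S n + h n := Finset.sum_Ico_succ_top hn1 h
      rw [this]; ring
    have habel := abel_id w S n₀ N hN
    have habel2 := abel_id w (fun n => (n:ℝ)) n₀ N hN
    have hid2 : ∑ n ∈ Ico n₀ N, (w n - w (n+1)) * ((n:ℝ)+1)
        = ∑ n ∈ Ico n₀ N, w n - w N * N + w n₀ * n₀ := by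
      have h0 : ∑ n ∈ Ico n₀ N, w n * ((n:ℝ) + 1 - (n:ℝ)) = ∑ n ∈ Ico n₀ N, w n := by
        apply Finset.sum_congr rfl; intro n _; ring
      push_cast at habel2 ⊢
      linarith [habel2, h0]
    -- bound |T|
    have hTbound : |∑ n ∈ Ico n₀ N, w n * h n|
        ≤ ε/2 * ∑ n ∈ Ico n₀ N, w n + ε * (w n₀ * n₀) := by
      rw [hT, habel]
      have bsum : |∑ n ∈ Ico n₀ N, (w n - w (n+1)) * S (n+1)|
          ≤ ∑ n ∈ Ico n₀ N, (w n - w (n+1)) * (ε/2 * ((n:ℝ)+1)) := by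
        refine (Finset.abs_sum_le_sum_abs _ _).trans (Finset.sum_le_sum ?_)
        intro n hn
        have hwd : 0 ≤ w n - w (n+1) := sub_nonneg.mpr (hwa (Nat.le_succ n))
        rw [abs_mul, abs_of_nonneg hwd]
        have : |S (n+1)| ≤ ε/2 * ((n:ℝ)+1) := by
          have := hSbound (n+1) (le_trans (Finset.mem_Ico.mp hn).1 (Nat.le_succ n))
          push_cast at this ⊢; linarith
        exact mul_le_mul_of_nonneg_left this hwd
      have hSN : |S N| ≤ ε/2 * N := hSbound N hN
      have hSn₀ : |S n₀| ≤ ε/2 * n₀ := hSbound n₀ le_rfl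
      have hwN0 : 0 ≤ w N := hw0 N
      have hwn₀0 : 0 ≤ w n₀ := hw0 n₀
      have e1 : ∑ n ∈ Ico n₀ N, (w n - w (n+1)) * (ε/2 * ((n:ℝ)+1))
          = ε/2 * (∑ n ∈ Ico n₀ N, w n - w N * N + w n₀ * n₀) := by
        rw [← hid2, Finset.mul_sum]
        apply Finset.sum_congr rfl; intro n _; ring
      calc |w N * S N - w n₀ * S n₀ + ∑ n ∈ Ico n₀ N, (w n - w (n+1)) * S (n+1)|
          ≤ |w N * S N| + |w n₀ * S n₀| + |∑ n ∈ Ico n₀ N, (w n - w (n+1)) * S (n+1)| := by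
            exact (abs_add_le _ _).trans (by gcongr; exact abs_sub _ _)
        _ ≤ w N * (ε/2 * N) + w n₀ * (ε/2 * n₀)
              + ε/2 * (∑ n ∈ Ico n₀ N, w n - w N * N + w n₀ * n₀) := by
            rw [abs_mul, abs_mul, abs_of_nonneg hwN0, abs_of_nonneg hwn₀0]
            gcongr
            · exact bsum.trans_eq e1
        _ = ε/2 * ∑ n ∈ Ico n₀ N, w n + ε * (w n₀ * n₀) := by ring
    have hmono : ∑ n ∈ Ico n₀ N, w n ≤ ∑ n ∈ Ico 1 N, w n := by
      apply Finset.sum_le_sum_of_subset_of_nonneg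
      · apply Finset.Ico_subset_Ico hn₀1 le_rfl
      · intro i _ _; exact hw0 i
    calc |∑ n ∈ Ico 1 N, w n * h n|
        ≤ |∑ n ∈ Ico 1 n₀, w n * h n| + |∑ n ∈ Ico n₀ N, w n * h n| := by
          rw [hsplit]; exact abs_add_le _ _
      _ ≤ B₀ + (ε/2 * ∑ n ∈ Ico n₀ N, w n + ε * (w n₀ * n₀)) := by
          gcongr
          exact Finset.abs_sum_le_sum_abs _ _
      _ ≤ C₁ + ε/2 * ∑ n ∈ Ico 1 N, w n := by
          rw [hC₁def]
          nlinarith [hε2]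
  -- conclude
  have hev1 : ∀ᶠ N : ℕ in atTop, max (2*C₁/ε + 1) 1 ≤ ∑ n ∈ Ico 1 N, w n :=
    hW.eventually_ge_atTop _
  have hev2 : ∀ᶠ N : ℕ in atTop, n₀ ≤ N := Filter.eventually_ge_atTop n₀
  filter_upwards [hev1, hev2] with N hWN hNn₀
  set WN := ∑ n ∈ Ico 1 N, w n with hWNdef
  have hW1 : (1:ℝ) ≤ WN := le_trans (le_max_right _ _) hWN
  have hW2 : 2*C₁/ε + 1 ≤ WN := le_trans (le_max_left _ _) hWN
  have hWpos : 0 < WN := lt_of_lt_of_le one_pos hW1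
  rw [Real.norm_eq_abs, abs_div, abs_of_pos hWpos, div_lt_iff₀ hWpos]
  have hk := key N hNn₀
  have hC : C₁ < ε/2 * WN := by
    have h3 : 2*C₁/ε < WN := by linarith
    rw [div_lt_iff₀ hε] at h3
    nlinarith
  nlinarith


private lemma sum_Ico_blocks' (F : ℕ → ℝ) (a L : ℕ) :
    ∀ Q : ℕ, ∑ n ∈ Ico a (a + Q*L), F n
      = ∑ j ∈ range Q, ∑ n ∈ Ico (a + j*L) (a + j*L + L), F n := by
  intro Q
  induction Q with
  | zero => simp
  | succ Q ih =>
      have h1 : a ≤ a + Q*L := Nat.le_add_right _ _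
      have h2 : a + Q*L ≤ a + (Q+1)*L :=
        Nat.add_le_add_left (Nat.mul_le_mul_right L (Nat.le_succ Q)) a
      rw [Finset.sum_range_succ, ← ih, ← Finset.sum_Ico_consecutive F h1 h2]
      congr 2
      ring

private lemma card_eq_sum_ind' (R : Set ℕ) [DecidablePred (· ∈ R)] (N : ℕ) :
    (Nat.card ↥(R ∩ Set.Iio N) : ℝ) = ∑ n ∈ range N, (if n ∈ R then (1:ℝ) else 0) := by
  rw [Finset.sum_boole]
  congr 1
  rw [Nat.card_coe_set_eq]
  rw [show R ∩ Set.Iio N = ↑((range N).filter (· ∈ R)) by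
    ext x; simp [and_comm], Set.ncard_coe_finset]

set_option maxHeartbeats 1000000 in
private lemma cesaro_lemma
    (R : Set ℕ)
    (hR : Tendsto (fun N : ℕ => (Nat.card ↥(R ∩ Set.Iio N) : ℝ) / N) atTop (nhds 0))
    (g : ℕ → ℝ) (Cg : ℝ) (hg_bdd : ∀ n, |g n| ≤ Cg)
    (hg_unif : ∀ ε : ℝ, 0 < ε → ∃ L₀ : ℕ, ∀ L : ℕ, L₀ ≤ L → ∀ M : ℕ,
      |(1 / (L : ℝ)) * ∑ n ∈ Finset.Ico M (M + L), g n| < ε)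
    (f : ℕ → ℝ) (Cf : ℝ) (hf_bdd : ∀ k, |f k| ≤ Cf) :
    Tendsto (fun N : ℕ =>
        (∑ n ∈ Ico 1 N, f (Nat.card ↥(R ∩ Set.Icc 1 n)) * g n) / N) atTop (nhds 0) := by
  classical
  set k : ℕ → ℕ := fun n => Nat.card ↥(R ∩ Set.Icc 1 n) with hkdef
  set χ : ℕ → ℝ := fun n => if n ∈ R then 1 else 0 with hχdef
  have hχ0 : ∀ n, 0 ≤ χ n := by intro n; simp only [hχdef]; split <;> norm_num
  have hCf : 0 ≤ Cf := le_trans (abs_nonneg _) (hf_bdd 0)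
  have hCg : 0 ≤ Cg := le_trans (abs_nonneg _) (hg_bdd 0)
  set D : ℝ := (Cf + 1) * (Cg + 1) with hDdef
  have hD : 0 < D := by positivity
  have hCfD : Cf ≤ D := by nlinarith
  have hCfCgD : Cf * Cg ≤ D := by nlinarith
  have hfg : ∀ m n, |f m * g n| ≤ Cf * Cg := by
    intro m n
    rw [abs_mul]
    exact mul_le_mul (hf_bdd m) (hg_bdd n) (abs_nonneg _) hCf
  rw [NormedAddCommGroup.tendsto_nhds_zero]
  intro ε hε
  have hδ : 0 < ε/(3*D) := by positivity
  obtain ⟨L₀, hL₀⟩ := hg_unif (ε/(3*D)) hδ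
  set L : ℕ := max L₀ 1 with hLdef
  have hL1 : 1 ≤ L := le_max_right _ _
  have hLr : (0:ℝ) < L := by exact_mod_cast Nat.lt_of_lt_of_le Nat.zero_lt_one hL1
  -- per-block bound
  have hblock : ∀ M : ℕ,
      |∑ n ∈ Ico M (M+L), f (k n) * g n|
        ≤ Cf * (ε/(3*D) * L) + (2*D*(L:ℝ)) * ∑ n ∈ Ico M (M+L), χ n := by
    intro M
    set c : ℝ := ∑ n ∈ Ico M (M+L), χ n with hcdef
    have hc0 : 0 ≤ c := Finset.sum_nonneg fun n _ => hχ0 n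
    have hgsum : |∑ n ∈ Ico M (M+L), g n| ≤ ε/(3*D) * L := by
      have h1 := hL₀ L (le_max_left _ _) M
      rw [abs_mul, abs_of_pos (by positivity : (0:ℝ) < 1/(L:ℝ))] at h1
      rw [one_div] at h1
      have := (inv_mul_lt_iff₀ hLr).mp h1
      linarith [this]
    have keyterm : ∀ n ∈ Ico M (M+L),
        |f (k n) * g n - f (k M) * g n| ≤ 2*(Cf*Cg)*c := by
      intro n hn
      obtain ⟨hMn, hnML⟩ := Finset.mem_Ico.mp hn
      by_cases hcz : ∀ m ∈ Ico M (M+L), m ∉ R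
      · have hkk : k n = k M := by
          have hset : R ∩ Set.Icc 1 n = R ∩ Set.Icc 1 M := by
            ext x
            simp only [Set.mem_inter_iff, Set.mem_Icc]
            constructor
            · rintro ⟨hxR, hx1, hxn⟩
              refine ⟨hxR, hx1, ?_⟩
              by_contra hxM
              push_neg at hxM
              exact hcz x (Finset.mem_Ico.mpr ⟨hxM.le, lt_of_le_of_lt hxn hnML⟩) hxR
            · rintro ⟨hxR, hx1, hxM⟩
              exact ⟨hxR, hx1, le_trans hxM hMn⟩
          simp only [hkdef, hset]
        rw [hkk, sub_self, abs_zero]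
        positivity
      · push_neg at hcz
        obtain ⟨m, hm, hmR⟩ := hcz
        have hc1 : 1 ≤ c := by
          have h4 := Finset.single_le_sum (f := χ) (fun n _ => hχ0 n) hm
          have h5 : χ m = 1 := by simp [hχdef, hmR]
          rw [h5] at h4
          exact h4
        have h1 := hfg (k n) n
        have h2 := hfg (k M) n
        have h3 : |f (k n) * g n - f (k M) * g n| ≤ 2*(Cf*Cg) := by
          calc |f (k n) * g n - f (k M) * g n| ≤ |f (k n) * g n| + |f (k M) * g n| :=
                abs_sub _ _
            _ ≤ 2*(Cf*Cg) := by linarith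
        nlinarith [mul_nonneg hCf hCg]
    have hsum_split : ∑ n ∈ Ico M (M+L), f (k n) * g n
        = ∑ n ∈ Ico M (M+L), f (k M) * g n
          + ∑ n ∈ Ico M (M+L), (f (k n) * g n - f (k M) * g n) := by
      rw [← Finset.sum_add_distrib]
      apply Finset.sum_congr rfl; intro n _; ring
    have hcard : (Ico M (M+L)).card = L := by rw [Nat.card_Ico]; omega
    calc |∑ n ∈ Ico M (M+L), f (k n) * g n|
        ≤ |∑ n ∈ Ico M (M+L), f (k M) * g n|
          + |∑ n ∈ Ico M (M+L), (f (k n) * g n - f (k M) * g n)| := by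
          rw [hsum_split]; exact abs_add_le _ _
      _ ≤ Cf * (ε/(3*D) * L) + (L:ℝ) * (2*(Cf*Cg)*c) := by
          gcongr
          · rw [← Finset.mul_sum, abs_mul]
            exact mul_le_mul (hf_bdd _) hgsum (abs_nonneg _) hCf
          · calc |∑ n ∈ Ico M (M+L), (f (k n) * g n - f (k M) * g n)|
                ≤ ∑ n ∈ Ico M (M+L), |f (k n) * g n - f (k M) * g n| :=
                  Finset.abs_sum_le_sum_abs _ _
              _ ≤ ∑ _n ∈ Ico M (M+L), 2*(Cf*Cg)*c := Finset.sum_le_sum keyterm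
              _ = (L:ℝ) * (2*(Cf*Cg)*c) := by
                  rw [Finset.sum_const, hcard, nsmul_eq_mul]
      _ ≤ Cf * (ε/(3*D) * L) + (2*D*(L:ℝ)) * c := by
          nlinarith [mul_nonneg (mul_nonneg hLr.le hc0) (sub_nonneg.mpr hCfCgD)]
  -- eventual conditions
  have hev1 : ∀ᶠ N : ℕ in atTop,
      (Nat.card ↥(R ∩ Set.Iio N) : ℝ) / N < ε/(6*D*L) := by
    have := hR.eventually (eventually_lt_nhds (show (0:ℝ) < ε/(6*D*L) by positivity))
    exact this
  have hev2 : ∀ᶠ N : ℕ in atTop, 3*D*L/ε < (N:ℝ) :=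
    tendsto_natCast_atTop_atTop.eventually_gt_atTop _
  have hev3 : ∀ᶠ N : ℕ in atTop, 1 ≤ N := eventually_ge_atTop 1
  filter_upwards [hev1, hev2, hev3] with N hρ hNbig hN1
  have hNr : (0:ℝ) < N := by exact_mod_cast Nat.lt_of_lt_of_le Nat.zero_lt_one hN1
  set Q : ℕ := (N-1)/L with hQdef
  have hQL1 : Q*L ≤ N-1 := Nat.div_mul_le_self _ _
  have hQL2 : N-1 < Q*L + L := by
    have h2 : (N-1) % L < L := Nat.mod_lt _ (by omega)
    have h3 := Nat.div_add_mod (N-1) L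
    have h4 : L * ((N-1)/L) = Q*L := by rw [hQdef]; ring
    omega
  have hq1 : 1 + Q*L ≤ N := by omega
  have hq2 : N ≤ 1 + Q*L + L := by omega
  -- split
  have hsplit : ∑ n ∈ Ico 1 N, f (k n) * g n
      = ∑ n ∈ Ico 1 (1 + Q*L), f (k n) * g n
        + ∑ n ∈ Ico (1 + Q*L) N, f (k n) * g n :=
    (Finset.sum_Ico_consecutive _ (by omega) hq1).symm
  have hmain : |∑ n ∈ Ico 1 (1 + Q*L), f (k n) * g n|
      ≤ (Q:ℝ) * (Cf * (ε/(3*D) * L))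
        + (2*D*(L:ℝ)) * (Nat.card ↥(R ∩ Set.Iio N) : ℝ) := by
    rw [sum_Ico_blocks' _ 1 L Q]
    calc |∑ j ∈ range Q, ∑ n ∈ Ico (1 + j*L) (1 + j*L + L), f (k n) * g n|
        ≤ ∑ j ∈ range Q, |∑ n ∈ Ico (1 + j*L) (1 + j*L + L), f (k n) * g n| :=
          Finset.abs_sum_le_sum_abs _ _
      _ ≤ ∑ j ∈ range Q, (Cf * (ε/(3*D) * L)
            + (2*D*(L:ℝ)) * ∑ n ∈ Ico (1 + j*L) (1 + j*L + L), χ n) := by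
          apply Finset.sum_le_sum
          intro j _
          exact hblock (1 + j*L)
      _ = (Q:ℝ) * (Cf * (ε/(3*D) * L))
            + (2*D*(L:ℝ)) * ∑ j ∈ range Q, ∑ n ∈ Ico (1 + j*L) (1 + j*L + L), χ n := by
          rw [Finset.sum_add_distrib, Finset.sum_const, Finset.card_range, nsmul_eq_mul,
            ← Finset.mul_sum]
      _ ≤ (Q:ℝ) * (Cf * (ε/(3*D) * L))
            + (2*D*(L:ℝ)) * (Nat.card ↥(R ∩ Set.Iio N) : ℝ) := by
          gcongr
          rw [← sum_Ico_blocks' χ 1 L Q, card_eq_sum_ind' R N]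
          apply Finset.sum_le_sum_of_subset_of_nonneg
          · intro x hx
            rw [Finset.mem_Ico] at hx
            rw [Finset.mem_range]
            omega
          · intro i _ _; exact hχ0 i
  have hrem : |∑ n ∈ Ico (1 + Q*L) N, f (k n) * g n| ≤ (L:ℝ) * D := by
    calc |∑ n ∈ Ico (1 + Q*L) N, f (k n) * g n|
        ≤ ∑ n ∈ Ico (1 + Q*L) N, |f (k n) * g n| := Finset.abs_sum_le_sum_abs _ _
      _ ≤ ∑ _n ∈ Ico (1 + Q*L) N, Cf * Cg := Finset.sum_le_sum fun n _ => hfg _ _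
      _ = ((N - (1 + Q*L) : ℕ) : ℝ) * (Cf * Cg) := by
          rw [Finset.sum_const, Nat.card_Ico, nsmul_eq_mul]
      _ ≤ (L:ℝ) * D := by
          have h1 : ((N - (1 + Q*L) : ℕ) : ℝ) ≤ (L:ℝ) := by
            have : N - (1 + Q*L) ≤ L := by omega
            exact_mod_cast this
          have h2 : (0:ℝ) ≤ (N - (1 + Q*L) : ℕ) := Nat.cast_nonneg _
          nlinarith
  -- final arithmetic
  rw [Real.norm_eq_abs, abs_div, abs_of_pos hNr, div_lt_iff₀ hNr]
  have hQLN : (Q:ℝ) * (L:ℝ) ≤ (N:ℝ) := by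
    have : Q * L ≤ N := by omega
    exact_mod_cast this
  have hcard0 : (0:ℝ) ≤ (Nat.card ↥(R ∩ Set.Iio N) : ℝ) := Nat.cast_nonneg _
  have hA1 : (Q:ℝ) * (Cf * (ε/(3*D) * L)) ≤ ε/3 * N := by
    have hQ0 : (0:ℝ) ≤ Q := Nat.cast_nonneg _
    have h1 : (Q:ℝ) * (Cf * (ε/(3*D) * L)) = (Q*L) * Cf * (ε/(3*D)) := by ring
    rw [h1]
    have h2 : (Q:ℝ)*L*Cf ≤ N*D := by nlinarith
    calc (Q:ℝ)*L*Cf * (ε/(3*D)) ≤ N*D*(ε/(3*D)) := by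
          apply mul_le_mul_of_nonneg_right h2 (le_of_lt hδ)
      _ = ε/3 * N := by field_simp
  have hA2 : (2*D*(L:ℝ)) * (Nat.card ↥(R ∩ Set.Iio N) : ℝ) ≤ ε/3 * N := by
    have h1 : (Nat.card ↥(R ∩ Set.Iio N) : ℝ) ≤ ε/(6*D*L) * N := by
      rw [div_lt_iff₀ hNr] at hρ
      linarith
    calc (2*D*(L:ℝ)) * (Nat.card ↥(R ∩ Set.Iio N) : ℝ)
        ≤ (2*D*(L:ℝ)) * (ε/(6*D*L) * N) := by
          apply mul_le_mul_of_nonneg_left h1 (by positivity)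
      _ = ε/3 * N := by field_simp; ring
  have hA3 : (L:ℝ) * D < ε/3 * N := by
    rw [div_lt_iff₀ hε] at hNbig
    nlinarith
  calc |∑ n ∈ Ico 1 N, f (k n) * g n|
      ≤ |∑ n ∈ Ico 1 (1 + Q*L), f (k n) * g n|
        + |∑ n ∈ Ico (1 + Q*L) N, f (k n) * g n| := by rw [hsplit]; exact abs_add_le _ _
    _ < ε * N := by linarith [hmain, hrem, hA1, hA2, hA3]

/-- If `R ⊆ ℕ` has density `0`, `(g n)` is a bounded sequence whose interval averages
tend to `0` uniformly, `(f k)` is any bounded sequence, and `(w n)` is a non-increasing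
sequence of nonnegative weights with `∑ w n = ∞`, then
`(1/∑_{n<N} w n) ∑_{n<N} w n · f_{X(1)+⋯+X(n)} · g n → 0`,
where `X` is the indicator of `R` (so `X(1)+⋯+X(n) = |R ∩ [1, n]|`). -/
theorem stmt10
    (R : Set ℕ)
    (hR : Tendsto (fun N : ℕ => (Nat.card ↥(R ∩ Set.Iio N) : ℝ) / N) atTop (nhds 0))
    (g : ℕ → ℝ) (Cg : ℝ) (hg_bdd : ∀ n, |g n| ≤ Cg)
    (hg_unif : ∀ ε : ℝ, 0 < ε → ∃ L₀ : ℕ, ∀ L : ℕ, L₀ ≤ L → ∀ M : ℕ,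
      |(1 / (L : ℝ)) * ∑ n ∈ Finset.Ico M (M + L), g n| < ε)
    (f : ℕ → ℝ) (Cf : ℝ) (hf_bdd : ∀ k, |f k| ≤ Cf)
    (w : ℕ → ℝ) (hw_nonneg : ∀ n, 0 ≤ w n) (hw_anti : Antitone w)
    (hw_div : Tendsto (fun N : ℕ => ∑ n ∈ Finset.Ico 1 N, w n) atTop atTop) :
    Tendsto (fun N : ℕ =>
        (∑ n ∈ Finset.Ico 1 N, w n * f (Nat.card ↥(R ∩ Set.Icc 1 n)) * g n) /
          (∑ n ∈ Finset.Ico 1 N, w n))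
      atTop (nhds 0) := by
  have h := weighted_of_cesaro (fun n => f (Nat.card ↥(R ∩ Set.Icc 1 n)) * g n) w
    hw_nonneg hw_anti hw_div (cesaro_lemma R hR g Cg hg_bdd hg_unif f Cf hf_bdd)
  simpa [mul_assoc] using h
end

section
/- (Strong law of large numbers for uniformly bounded uncorrelated random variables.) Suppose the random variables X_1, X_2, … are nonnegative, uniformly bounded (0 ≤ X_n ≤ c for some constant c), pairwise uncorrelated (E[X_n X_m] = E[X_n]·E[X_m] for n ≠ m), and dissipative (∑_n E[X_n] = ∞). Then lim_{N→∞} (∑_{n<N} X_n) / (∑_{n<N} E[X_n]) = 1 with probability 1. -/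
/-!
Chebyshev's inequality along a sparse subsequence, then interpolation by monotonicity.
Write `b N = ∑_{n<N} E[X n]` and `S N = ∑_{n<N} X n`. Uncorrelatedness and `0 ≤ X n ≤ c` give
`Var[S N] ≤ c * b N`. Let `N_k` be the first index with `b N_k ≥ (k+1)²`; as the increments of `b`
are at most `c`, also `b N_k < (k+1)² + c`. Hence `∑_k Var[S N_k / b N_k] ≤ c ∑_k 1 / b N_k < ∞`,
which forces `S N_k / b N_k → 1` almost surely, and `b N_{k+1} / b N_k → 1`. For
`N_k ≤ N < N_{k+1}`, monotonicity of `S` and `b` puts `S N / b N` between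
`S N_k / b N_{k+1}` and `S N_{k+1} / b N_k`, which both tend to `1`.
-/

open MeasureTheory Filter Finset ProbabilityTheory Topology

lemma monotone_sum_range_of_nonneg {a : ℕ → ℝ} (ha : ∀ n, 0 ≤ a n) :
    Monotone fun N => ∑ n ∈ range N, a n :=
  fun _ _ hMN => sum_le_sum_of_subset_of_nonneg (range_mono hMN) fun n _ _ => ha n

lemma exists_le_lt_succ_of_tendsto_atTop {ψ : ℕ → ℕ} (hψ : Tendsto ψ atTop atTop) {K N : ℕ}
    (hKN : ψ K ≤ N) : ∃ k ≥ K, ψ k ≤ N ∧ N < ψ (k + 1) := by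
  by_contra! h
  have hle : ∀ k ≥ K, ψ k ≤ N := fun k hk => by
    induction k, hk using Nat.le_induction with
    | base => exact hKN
    | succ k hk ih => exact h k hk ih
  obtain ⟨k, hNk, hKk⟩ := ((hψ.eventually_gt_atTop N).and (eventually_ge_atTop K)).exists
  exact (hle k hKk).not_gt hNk

lemma tendsto_div_of_tendsto_div_subseq {g b : ℕ → ℝ} {ψ : ℕ → ℕ} (hg0 : ∀ n, 0 ≤ g n)
    (hg : Monotone g) (hb : Monotone b) (hψ : Tendsto ψ atTop atTop) (hbψ : ∀ k, 0 < b (ψ k))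
    (hgbψ : Tendsto (fun k => g (ψ k) / b (ψ k)) atTop (𝓝 1))
    (hbψ_ratio : Tendsto (fun k => b (ψ (k + 1)) / b (ψ k)) atTop (𝓝 1)) :
    Tendsto (fun N => g N / b N) atTop (𝓝 1) := by
  have hlower : Tendsto (fun k => g (ψ k) / b (ψ (k + 1))) atTop (𝓝 1) := by
    have h := hgbψ.div hbψ_ratio one_ne_zero
    rw [div_one] at h
    exact h.congr fun k => div_div_div_cancel_right₀ (hbψ k).ne' _ _
  have hupper : Tendsto (fun k => g (ψ (k + 1)) / b (ψ k)) atTop (𝓝 1) := by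
    have h := (hgbψ.comp (tendsto_add_atTop_nat 1)).mul hbψ_ratio
    rw [one_mul] at h
    exact h.congr fun k => div_mul_div_cancel₀ (hbψ (k + 1)).ne'
  refine tendsto_order.2 ⟨fun a ha => ?_, fun a ha => ?_⟩
  · obtain ⟨K, hK⟩ := eventually_atTop.1 (hlower.eventually (lt_mem_nhds ha))
    filter_upwards [eventually_ge_atTop (ψ K)] with N hN
    obtain ⟨k, hk, hkN, hNk⟩ := exists_le_lt_succ_of_tendsto_atTop hψ hN
    calc a < g (ψ k) / b (ψ (k + 1)) := hK k hk
      _ ≤ g N / b N :=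
        div_le_div₀ (hg0 N) (hg hkN) ((hbψ k).trans_le (hb hkN)) (hb hNk.le)
  · obtain ⟨K, hK⟩ := eventually_atTop.1 (hupper.eventually (gt_mem_nhds ha))
    filter_upwards [eventually_ge_atTop (ψ K)] with N hN
    obtain ⟨k, hk, hkN, hNk⟩ := exists_le_lt_succ_of_tendsto_atTop hψ hN
    calc g N / b N ≤ g (ψ (k + 1)) / b (ψ k) :=
          div_le_div₀ (hg0 _) (hg hNk.le) (hbψ k) (hb hkN)
      _ < a := hK k hk

lemma tendsto_add_two_sq_add_div_add_one_sq (c : ℝ) :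
    Tendsto (fun k : ℕ => (((k : ℝ) + 2) ^ 2 + c) / ((k : ℝ) + 1) ^ 2) atTop (𝓝 1) := by
  have h0 := tendsto_one_div_add_atTop_nhds_zero_nat (𝕜 := ℝ)
  have h := ((tendsto_const_nhds (x := (1 : ℝ))).add h0).pow 2 |>.add
    ((tendsto_const_nhds (x := c)).mul (h0.pow 2))
  rw [add_zero, one_pow, zero_pow two_ne_zero, mul_zero, add_zero] at h
  refine h.congr fun k => ?_
  field_simp
  ring

lemma exists_monotone_sq_le_sum_range_lt {a : ℕ → ℝ} {c : ℝ} (hac : ∀ n, a n ≤ c)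
    (hdiv : Tendsto (fun N => ∑ n ∈ range N, a n) atTop atTop) :
    ∃ ψ : ℕ → ℕ, Monotone ψ ∧ ∀ k : ℕ, ((k : ℝ) + 1) ^ 2 ≤ ∑ n ∈ range (ψ k), a n ∧
      ∑ n ∈ range (ψ k), a n < ((k : ℝ) + 1) ^ 2 + c := by
  classical
  set b : ℕ → ℝ := fun N => ∑ n ∈ range N, a n with hb_def
  have hex : ∀ k : ℕ, ∃ N, ((k : ℝ) + 1) ^ 2 ≤ b N :=
    fun k => (hdiv.eventually_ge_atTop _).exists
  set ψ : ℕ → ℕ := fun k => Nat.find (hex k)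
  have hψ_le : ∀ k : ℕ, ((k : ℝ) + 1) ^ 2 ≤ b (ψ k) := fun k => Nat.find_spec (hex k)
  refine ⟨ψ, fun k l hkl => Nat.find_mono fun N hN => le_trans (by gcongr) hN,
    fun k => ⟨hψ_le k, ?_⟩⟩
  obtain ⟨N, hN⟩ : ∃ N, ψ k = N + 1 := Nat.exists_eq_succ_of_ne_zero fun h => by
    have := hψ_le k
    rw [h] at this
    simp only [hb_def, range_zero, sum_empty] at this
    exact this.not_gt (by positivity)
  have hNψ : N < ψ k := by omega
  have hbN : b N < ((k : ℝ) + 1) ^ 2 := not_le.1 (Nat.find_min (hex k) hNψ)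
  rw [hN, sum_range_succ]
  linarith [hac N]

lemma exists_subseq_summable_inv_sum_range {a : ℕ → ℝ} {c : ℝ} (ha0 : ∀ n, 0 ≤ a n)
    (hac : ∀ n, a n ≤ c) (hdiv : Tendsto (fun N => ∑ n ∈ range N, a n) atTop atTop) :
    ∃ ψ : ℕ → ℕ, Tendsto ψ atTop atTop ∧ (∀ k, 0 < ∑ n ∈ range (ψ k), a n) ∧
      Summable (fun k => (∑ n ∈ range (ψ k), a n)⁻¹) ∧
      Tendsto (fun k => (∑ n ∈ range (ψ (k + 1)), a n) / ∑ n ∈ range (ψ k), a n)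
        atTop (𝓝 1) := by
  set b : ℕ → ℝ := fun N => ∑ n ∈ range N, a n
  have hb : Monotone b := monotone_sum_range_of_nonneg ha0
  obtain ⟨ψ, hψ_mono, hψ⟩ := exists_monotone_sq_le_sum_range_lt hac hdiv
  have hψ_pos : ∀ k : ℕ, 0 < b (ψ k) := fun k => lt_of_lt_of_le (by positivity) (hψ k).1
  refine ⟨ψ, ?_, hψ_pos, ?_, ?_⟩
  · refine tendsto_atTop_atTop.2 fun N => ?_
    obtain ⟨K, hK⟩ := exists_nat_gt (b N)
    refine ⟨K, fun k hk => ?_⟩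
    by_contra! h
    have : ((k : ℝ) + 1) ^ 2 ≤ b N := (hψ k).1.trans (hb h.le)
    nlinarith [(Nat.cast_le.2 hk : (K : ℝ) ≤ k)]
  · refine Summable.of_nonneg_of_le (fun k => (inv_pos.2 (hψ_pos k)).le)
      (fun k => inv_anti₀ (by positivity) (hψ k).1) ?_
    simpa [one_div] using
      (summable_nat_add_iff 1).2 (Real.summable_one_div_nat_pow.2 one_lt_two)
  · have hc : 0 ≤ c := (ha0 0).trans (hac 0)
    refine tendsto_of_tendsto_of_tendsto_of_le_of_le tendsto_const_nhds
      (tendsto_add_two_sq_add_div_add_one_sq c) (fun k => ?_) (fun k => ?_)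
    · rw [le_div_iff₀ (hψ_pos k), one_mul]
      exact hb (hψ_mono k.le_succ)
    · have := (hψ (k + 1)).2
      push_cast at this
      exact div_le_div₀ (by positivity) (by linarith) (by positivity) (hψ k).1

section Variance

variable {Ω : Type*} [MeasurableSpace Ω] {μ : Measure Ω}

lemma variance_sum_of_covariance_eq_zero [IsFiniteMeasure μ] {ι : Type*} {s : Finset ι}
    {X : ι → Ω → ℝ} (hX : ∀ i ∈ s, MemLp (X i) 2 μ)
    (hcov : ∀ i ∈ s, ∀ j ∈ s, i ≠ j → cov[X i, X j; μ] = 0) :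
    Var[fun ω => ∑ i ∈ s, X i ω; μ] = ∑ i ∈ s, Var[X i; μ] := by
  rw [variance_fun_sum' hX]
  refine sum_congr rfl fun i hi => ?_
  rw [sum_eq_single_of_mem i hi fun j hj hji => hcov i hi j hj hji.symm,
    covariance_self (hX i hi).aemeasurable]

lemma variance_le_mul_integral_of_mem_Icc [IsProbabilityMeasure μ] {X : Ω → ℝ} {c : ℝ}
    (hX : AEMeasurable X μ) (h : ∀ᵐ ω ∂μ, X ω ∈ Set.Icc 0 c) : Var[X; μ] ≤ c * μ[X] := by
  have hX0 : 0 ≤ μ[X] := integral_nonneg_of_ae (h.mono fun ω hω => hω.1)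
  calc Var[X; μ] ≤ (c - μ[X]) * (μ[X] - 0) := variance_le_sub_mul_sub h hX
    _ ≤ c * μ[X] := by nlinarith

lemma variance_sum_le_mul_sum_integral [IsProbabilityMeasure μ] {ι : Type*} {s : Finset ι}
    {X : ι → Ω → ℝ} {c : ℝ} (hX : ∀ i, AEMeasurable (X i) μ)
    (hXc : ∀ i, ∀ᵐ ω ∂μ, X i ω ∈ Set.Icc 0 c)
    (huncorr : ∀ i j, i ≠ j → ∫ ω, X i ω * X j ω ∂μ = μ[X i] * μ[X j]) :
    Var[fun ω => ∑ i ∈ s, X i ω; μ] ≤ c * ∑ i ∈ s, μ[X i] := by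
  have hLp : ∀ i, MemLp (X i) 2 μ := fun i =>
    memLp_of_bounded (hXc i) (hX i).aestronglyMeasurable 2
  rw [variance_sum_of_covariance_eq_zero (fun i _ => hLp i) fun i _ j _ hij => by
    rw [covariance_eq_sub (hLp i) (hLp j), Pi.mul_def, huncorr i j hij, sub_self], mul_sum]
  exact sum_le_sum fun i _ => variance_le_mul_integral_of_mem_Icc (hX i) (hXc i)

lemma ae_tendsto_sub_integral_of_summable_variance [IsFiniteMeasure μ] {Y : ℕ → Ω → ℝ}
    (hY : ∀ k, MemLp (Y k) 2 μ) (hsum : Summable fun k => Var[Y k; μ]) :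
    ∀ᵐ ω ∂μ, Tendsto (fun k => Y k ω - μ[Y k]) atTop (𝓝 0) := by
  have hmeas : ∀ k, AEMeasurable (fun ω => ‖Y k ω - μ[Y k]‖ₑ ^ 2) μ := fun k =>
    (((hY k).aemeasurable.sub_const _).enorm).pow_const 2
  have hfin : ∫⁻ ω, ∑' k, ‖Y k ω - μ[Y k]‖ₑ ^ 2 ∂μ ≠ ⊤ := by
    rw [lintegral_tsum hmeas]
    change ∑' k, eVar[Y k; μ] ≠ ⊤
    simp_rw [← (hY _).ofReal_variance_eq]
    rw [← ENNReal.ofReal_tsum_of_nonneg (fun k => variance_nonneg _ _) hsum]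
    exact ENNReal.ofReal_ne_top
  filter_upwards [ae_lt_top' (AEMeasurable.tsum hmeas) hfin] with ω hω
  have h := ((ENNReal.continuous_rpow_const (y := ((2 : ℕ) : ℝ)⁻¹)).tendsto 0).comp
    (ENNReal.tendsto_atTop_zero_of_tsum_ne_top hω.ne)
  simp only [Function.comp_def, ENNReal.pow_rpow_inv_natCast two_ne_zero] at h
  rw [tendsto_zero_iff_enorm_tendsto_zero]
  simpa using h

lemma ae_tendsto_sum_div_sum_integral_of_summable_inv [IsProbabilityMeasure μ]
    {X : ℕ → Ω → ℝ} {c : ℝ} (hX : ∀ n, AEMeasurable (X n) μ)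
    (hXc : ∀ n, ∀ᵐ ω ∂μ, X n ω ∈ Set.Icc 0 c)
    (huncorr : ∀ n m, n ≠ m → ∫ ω, X n ω * X m ω ∂μ = μ[X n] * μ[X m])
    {ψ : ℕ → ℕ} (hψ_pos : ∀ k, 0 < ∑ n ∈ range (ψ k), μ[X n])
    (hψ_sum : Summable fun k => (∑ n ∈ range (ψ k), μ[X n])⁻¹) :
    ∀ᵐ ω ∂μ, Tendsto (fun k => (∑ n ∈ range (ψ k), X n ω) / ∑ n ∈ range (ψ k), μ[X n])
      atTop (𝓝 1) := by
  set m : ℕ → ℝ := fun k => ∑ n ∈ range (ψ k), μ[X n]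
  have hLp : ∀ n, MemLp (X n) 2 μ := fun n =>
    memLp_of_bounded (hXc n) (hX n).aestronglyMeasurable 2
  set Y : ℕ → Ω → ℝ := fun k ω => (m k)⁻¹ * ∑ n ∈ range (ψ k), X n ω
  have hY_Lp : ∀ k, MemLp (Y k) 2 μ := fun k =>
    (memLp_finsetSum _ fun n _ => hLp n).const_mul _
  have hY_int : ∀ k, μ[Y k] = 1 := fun k => by
    simp only [Y, integral_const_mul,
      integral_finsetSum _ fun n _ => (hLp n).integrable one_le_two]
    exact inv_mul_cancel₀ (hψ_pos k).ne'
  have hY_var : ∀ k, Var[Y k; μ] ≤ c * (m k)⁻¹ := fun k => by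
    calc Var[Y k; μ] = (m k)⁻¹ ^ 2 * Var[fun ω => ∑ n ∈ range (ψ k), X n ω; μ] :=
          variance_const_mul _ _ _
      _ ≤ (m k)⁻¹ ^ 2 * (c * m k) := by
          gcongr
          exact variance_sum_le_mul_sum_integral hX hXc huncorr
      _ = c * (m k)⁻¹ := by field_simp [(hψ_pos k).ne']
  have hY_sum : Summable fun k => Var[Y k; μ] :=
    .of_nonneg_of_le (fun k => variance_nonneg _ _) hY_var (hψ_sum.mul_left c)
  filter_upwards [ae_tendsto_sub_integral_of_summable_variance hY_Lp hY_sum] with ω hω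
  simp only [hY_int, tendsto_sub_nhds_zero_iff] at hω
  simpa only [Y, inv_mul_eq_div] using hω

end Variance

/-- **Strong law of large numbers for uniformly bounded, pairwise uncorrelated,
nonnegative random variables.**  If `0 ≤ X n ≤ c`, the `X n` are pairwise uncorrelated
and `∑ E[X n] = ∞`, then `(∑_{n<N} X n) / (∑_{n<N} E[X n]) → 1` almost surely. -/
theorem stmt11
    {Ω : Type*} [MeasurableSpace Ω] (P : Measure Ω) [IsProbabilityMeasure P]
    (c : ℝ) (X : ℕ → Ω → ℝ) (hX_meas : ∀ n, Measurable (X n))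
    (hX_nonneg : ∀ n ω, 0 ≤ X n ω) (hX_bdd : ∀ n ω, X n ω ≤ c)
    (hX_uncorr : ∀ n m, n ≠ m →
      ∫ ω, X n ω * X m ω ∂P = (∫ ω, X n ω ∂P) * (∫ ω, X m ω ∂P))
    (hX_diss : Tendsto (fun N : ℕ => ∑ n ∈ Finset.range N, ∫ ω, X n ω ∂P) atTop atTop) :
    ∀ᵐ ω ∂P,
      Tendsto (fun N : ℕ =>
          (∑ n ∈ Finset.range N, X n ω) / (∑ n ∈ Finset.range N, ∫ ω', X n ω' ∂P))
        atTop (nhds 1) := by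
  have hX_Icc : ∀ n, ∀ᵐ ω ∂P, X n ω ∈ Set.Icc 0 c :=
    fun n => ae_of_all _ fun ω => ⟨hX_nonneg n ω, hX_bdd n ω⟩
  have hmean_le : ∀ n, ∫ ω, X n ω ∂P ≤ c := fun n => by
    simpa using integral_mono_of_nonneg (μ := P) (ae_of_all _ (hX_nonneg n))
      (integrable_const c) (ae_of_all _ (hX_bdd n))
  obtain ⟨ψ, hψ, hψ_pos, hψ_sum, hψ_ratio⟩ := exists_subseq_summable_inv_sum_range
    (fun n => integral_nonneg (hX_nonneg n)) hmean_le hX_diss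
  filter_upwards [ae_tendsto_sum_div_sum_integral_of_summable_inv
    (fun n => (hX_meas n).aemeasurable) hX_Icc hX_uncorr hψ_pos hψ_sum] with ω hω
  exact tendsto_div_of_tendsto_div_subseq (fun N => sum_nonneg fun n _ => hX_nonneg n ω)
    (monotone_sum_range_of_nonneg (hX_nonneg · ω))
    (monotone_sum_range_of_nonneg fun n => integral_nonneg (hX_nonneg n)) hψ hψ_pos hω hψ_ratio
end

section
/- (Transference inequality.) Let ℓ, N, Q be positive integers and let c_0, c_1, …, c_{N−1} be real numbers. Then for every dynamical system (X, μ, T) and all measurable functions F_1, …, F_ℓ : X → {0,1}, ∫_X | ∑_{n<N} c_n · F_1(T^{n}x) F_2(T^{2n}x) ⋯ F_ℓ(T^{ℓn}x) | dμ(x) ≤ max over all functions f_i : [0, Q + iN) → {0,1} (i = 1, …, ℓ) of (1/Q) ∑_{a<Q} | ∑_{n<N} c_n · f_1(a+n) f_2(a+2n) ⋯ f_ℓ(a+ℓn) |. -/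
open MeasureTheory Filter Finset

/-- **Transference inequality.**  For any real coefficients `c n`, any dynamical system
`(X, μ, T)` and any `{0,1}`-valued measurable functions `F₁, …, F_ℓ`,
`∫ |∑_{n<N} c n · F₁(T^n x) ⋯ F_ℓ(T^{ℓn} x)| dμ` is at most the maximum over all
`{0,1}`-valued functions `f i` supported on `[0, Q + iN)` of
`(1/Q) ∑_{a<Q} |∑_{n<N} c n · f₁(a+n) ⋯ f_ℓ(a+ℓn)|` (the maximum being attained, this
is expressed by an existential). -/
theorem stmt13
    (ℓ N Q : ℕ) (hℓ : 1 ≤ ℓ) (hN : 1 ≤ N) (hQ : 1 ≤ Q)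
    (c : ℕ → ℝ)
    {X : Type*} [MeasurableSpace X] (μ : Measure X) [IsProbabilityMeasure μ]
    (T : X → X) (hT : MeasurePreserving T μ μ)
    (F : ℕ → X → ℝ) (hF_meas : ∀ i, Measurable (F i))
    (hF01 : ∀ i x, F i x = 0 ∨ F i x = 1) :
    ∃ f : ℕ → ℕ → ℝ,
      (∀ i a, f i a = 0 ∨ f i a = 1) ∧
      (∀ i a, Q + i * N ≤ a → f i a = 0) ∧
      ∫ x, |∑ n ∈ Finset.range N, c n * ∏ i ∈ Finset.Icc 1 ℓ, F i (T^[i * n] x)| ∂μ ≤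
        (1 / (Q : ℝ)) * ∑ a ∈ Finset.range Q,
          |∑ n ∈ Finset.range N, c n * ∏ i ∈ Finset.Icc 1 ℓ, f i (a + i * n)| := by
  classical
  set h : X → ℝ := fun x => |∑ n ∈ Finset.range N, c n * ∏ i ∈ Finset.Icc 1 ℓ, F i (T^[i * n] x)|
    with hh
  have hmeas : Measurable h := by
    apply Measurable.abs
    apply Finset.measurable_sum
    intro n _
    exact measurable_const.mul (Finset.measurable_prod _ fun i _ =>
      (hF_meas i).comp (hT.measurable.iterate _))
  have hbound : ∀ x, ‖h x‖ ≤ ∑ n ∈ Finset.range N, |c n| := by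
    intro x
    rw [hh]
    simp only [Real.norm_eq_abs, abs_abs]
    refine (Finset.abs_sum_le_sum_abs _ _).trans (Finset.sum_le_sum fun n _ => ?_)
    rw [abs_mul]
    have : |∏ i ∈ Finset.Icc 1 ℓ, F i (T^[i * n] x)| ≤ 1 := by
      rw [Finset.abs_prod]
      refine Finset.prod_le_one (fun i _ => abs_nonneg _) (fun i _ => ?_)
      rcases hF01 i (T^[i * n] x) with h' | h' <;> simp [h']
    calc |c n| * |∏ i ∈ Finset.Icc 1 ℓ, F i (T^[i * n] x)| ≤ |c n| * 1 :=
          mul_le_mul_of_nonneg_left this (abs_nonneg _)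
      _ = |c n| := mul_one _
  have hint : Integrable h μ :=
    (integrable_const _).mono' hmeas.aestronglyMeasurable (Filter.Eventually.of_forall hbound)
  set g : X → ℝ := fun x => (1 / (Q : ℝ)) * ∑ a ∈ Finset.range Q, h (T^[a] x) with hg
  have hcomp : ∀ a : ℕ, ∫ x, h (T^[a] x) ∂μ = ∫ x, h x ∂μ := by
    intro a
    rw [← MeasureTheory.integral_map (hT.measurable.iterate a).aemeasurable
      hmeas.aestronglyMeasurable, (hT.iterate a).map_eq]
  have hintg : Integrable g μ := by
    apply Integrable.const_mul
    exact integrable_finset_sum _ fun a _ =>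
      (hT.iterate a).integrable_comp hmeas.aestronglyMeasurable |>.mpr hint
  have hIg : ∫ x, g x ∂μ = ∫ x, h x ∂μ := by
    rw [hg]
    simp only
    rw [MeasureTheory.integral_const_mul,
      MeasureTheory.integral_finset_sum (f := fun (a : ℕ) (x : X) => h (T^[a] x)) _
      (fun a _ => ((hT.iterate a).integrable_comp hmeas.aestronglyMeasurable).mpr hint)]
    simp only [hcomp, Finset.sum_const, Finset.card_range, nsmul_eq_mul]
    have hQ' : (Q : ℝ) ≠ 0 := Nat.cast_ne_zero.mpr (by omega)
    field_simp
  obtain ⟨x₀, hx₀⟩ := MeasureTheory.exists_integral_le hintg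
  refine ⟨fun i a => if a < Q + i * N then F i (T^[a] x₀) else 0, ?_, ?_, ?_⟩
  · intro i a
    by_cases hc : a < Q + i * N
    · simpa [hc] using hF01 i (T^[a] x₀)
    · simp [hc]
  · intro i a ha
    simp [Nat.not_lt.mpr ha]
  · rw [hIg] at hx₀
    refine le_trans hx₀ (le_of_eq ?_)
    rw [hg]
    simp only
    congr 1
    refine Finset.sum_congr rfl fun a ha => ?_
    rw [hh]
    simp only
    congr 1
    refine Finset.sum_congr rfl fun n hn => ?_
    congr 1
    refine Finset.prod_congr rfl fun i hi => ?_
    have hi1 : 1 ≤ i := (Finset.mem_Icc.mp hi).1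
    have haQ : a < Q := Finset.mem_range.mp ha
    have hnN : n < N := Finset.mem_range.mp hn
    have hlt : a + i * n < Q + i * N := by
      have h1 : i * (n + 1) ≤ i * N := Nat.mul_le_mul (le_refl i) hnN
      have h2 : i * (n + 1) = i * n + i := by ring
      omega
    rw [if_pos hlt, ← Function.iterate_add_apply, Nat.add_comm]
end

section
/- Let (u_n) be probabilities and (U_n) independent {0,1}-valued random variables with P(U_n = 1) = u_n; write S = ∑_{n<N} u_n. Let N, Q, q_1, q_2 be positive integers with q_1, q_2 coprime and q_1 q_2 = Q, and fix residues r_1 < q_1, r_2 < q_2. Let G_0 be the family of all functions g_0 : [0, Q) → {0,1}; for i = 1, 2 let G_i be the family of all functions g_i : [0, Q + iN) → {0,1} vanishing outside the residue class r_i (mod q_i). Then for every ε with 0 < ε < 1, P( sup over g_0 ∈ G_0, g_1 ∈ G_1, g_2 ∈ G_2 of | (1/S) ∑_{n<N} (U_n − u_n) · ∑_{a<Q} g_0(a) g_1(a+n) g_2(a+2n) | > ε ) ≤ 2^{Q + (Q+N)/q_1 + (Q+2N)/q_2 + 3} · exp( − ε² S / 4 ). -/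
/-!
For fixed `g₀, g₁, g₂` the weights `w n = ∑_{a<Q} g₀(a) g₁(a+n) g₂(a+2n)` lie in `[0, 1]`, since
by the Chinese remainder theorem at most one term is nonzero. Hence `∑_{n<N} (U n - u n) w n` is a
sum of independent centred Bernoulli variables scaled by at most `1`; the bound
`E exp (s (U - u)) ≤ exp (u s²)` for `|s| ≤ 1` and Chernoff's inequality at `s = ε / 2` bound each
tail by `2 exp (-ε² S / 4)`. Each `gᵢ` is the indicator of a subset of a finite set `Iᵢ` with
`#Iᵢ ≤ (Q + iN) / qᵢ + 1`, so a union bound over the at most `2 ^ (Q + #I₁ + #I₂)` triples of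
subsets finishes the proof.
-/

open MeasureTheory ProbabilityTheory Finset Real

lemma centered_bernoulli_exp_le {u s : ℝ} (hu : 0 ≤ u) (hs : |s| ≤ 1) :
    u * exp (s * (1 - u)) + (1 - u) * exp (-(s * u)) ≤ exp (u * s ^ 2) := by
  have hquad : exp s - 1 - s ≤ s ^ 2 := (le_abs_self _).trans (abs_exp_sub_one_sub_id_le hs)
  calc u * exp (s * (1 - u)) + (1 - u) * exp (-(s * u))
      = exp (-(s * u)) * (1 + u * (exp s - 1)) := by
        rw [show s * (1 - u) = s + -(s * u) by ring, exp_add]; ring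
    _ ≤ exp (-(s * u)) * exp (u * (exp s - 1)) := by
        gcongr; linarith [add_one_le_exp (u * (exp s - 1))]
    _ = exp (u * (exp s - 1 - s)) := by rw [← exp_add]; ring_nf
    _ ≤ exp (u * s ^ 2) := by gcongr

lemma comp_eq_add_indicator {Ω : Type*} {V : Ω → ℕ} (h01 : ∀ ω, V ω = 0 ∨ V ω = 1) (f : ℕ → ℝ) :
    (fun ω => f (V ω)) = fun ω => f 0 + {ω | V ω = 1}.indicator (fun _ => f 1 - f 0) ω := by
  ext ω
  rcases h01 ω with h | h <;> simp [h]

section ZeroOne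

variable {Ω : Type*} [MeasurableSpace Ω] {P : Measure Ω} [IsProbabilityMeasure P] {V : Ω → ℕ}

lemma integrable_comp_of_zero_or_one (hV : Measurable V) (h01 : ∀ ω, V ω = 0 ∨ V ω = 1)
    (f : ℕ → ℝ) : Integrable (fun ω => f (V ω)) P := by
  rw [comp_eq_add_indicator h01]
  exact (integrable_const _).add ((integrable_const _).indicator (hV (measurableSet_singleton 1)))

lemma integral_comp_of_zero_or_one (hV : Measurable V) (h01 : ∀ ω, V ω = 0 ∨ V ω = 1)
    {p : ℝ} (hp : 0 ≤ p) (hlaw : P {ω | V ω = 1} = ENNReal.ofReal p) (f : ℕ → ℝ) :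
    ∫ ω, f (V ω) ∂P = p * f 1 + (1 - p) * f 0 := by
  have hA : MeasurableSet {ω | V ω = 1} := hV (measurableSet_singleton 1)
  rw [comp_eq_add_indicator h01, integral_add (integrable_const _)
    ((integrable_const _).indicator hA), integral_const, integral_indicator_const _ hA]
  simp only [measureReal_def, hlaw, ENNReal.toReal_ofReal hp, measure_univ, ENNReal.toReal_one,
    smul_eq_mul]
  ring

end ZeroOne

structure IsIndepBernoulli {Ω : Type*} [MeasurableSpace Ω] (P : Measure Ω) (U : ℕ → Ω → ℕ)
    (u : ℕ → ℝ) : Prop where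
  measurable : ∀ n, Measurable (U n)
  zero_or_one : ∀ n ω, U n ω = 0 ∨ U n ω = 1
  indep : iIndepFun U P
  nonneg : ∀ n, 0 ≤ u n
  law : ∀ n, P {ω | U n ω = 1} = ENNReal.ofReal (u n)

namespace IsIndepBernoulli

variable {Ω : Type*} [MeasurableSpace Ω] {P : Measure Ω} [IsProbabilityMeasure P]
  {U : ℕ → Ω → ℕ} {u : ℕ → ℝ}

lemma mgf_centered_mul_le (hU : IsIndepBernoulli P U u) (n : ℕ) {c t : ℝ} (hc : |c| ≤ 1)
    (ht0 : 0 ≤ t) (ht1 : t ≤ 1) :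
    mgf (fun ω => ((U n ω : ℝ) - u n) * c) P t ≤ exp (t ^ 2 * u n) := by
  have htc : |t * c| ≤ 1 := by
    rw [abs_mul, abs_of_nonneg ht0]; nlinarith [abs_nonneg c]
  calc mgf (fun ω => ((U n ω : ℝ) - u n) * c) P t
      = u n * exp (t * c * (1 - u n)) + (1 - u n) * exp (-(t * c * u n)) := by
        rw [mgf, integral_comp_of_zero_or_one (hU.measurable n) (hU.zero_or_one n) (hU.nonneg n)
          (hU.law n) (fun k => exp (t * ((k - u n) * c)))]
        push_cast; ring_nf
    _ ≤ exp (u n * (t * c) ^ 2) := centered_bernoulli_exp_le (hU.nonneg n) htc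
    _ ≤ exp (t ^ 2 * u n) := by
        gcongr exp ?_
        have : c ^ 2 ≤ 1 := by rw [← sq_abs]; nlinarith [abs_nonneg c]
        nlinarith [mul_nonneg (mul_nonneg (hU.nonneg n) (sq_nonneg t)) (sub_nonneg.2 this)]

lemma measure_le_sum_le (hU : IsIndepBernoulli P U u) (s : Finset ℕ) {c : ℕ → ℝ}
    (hc : ∀ n, |c n| ≤ 1) {ε : ℝ} (hε0 : 0 ≤ ε) (hε2 : ε ≤ 2) :
    P {ω | ε * ∑ n ∈ s, u n ≤ ∑ n ∈ s, ((U n ω : ℝ) - u n) * c n}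
      ≤ ENNReal.ofReal (exp (-(ε ^ 2) * (∑ n ∈ s, u n) / 4)) := by
  set t := ε / 2 with ht
  set Y : ℕ → Ω → ℝ := fun n ω => ((U n ω : ℝ) - u n) * c n
  have hY_meas : ∀ n, Measurable (Y n) := fun n =>
    ((measurable_from_top.comp (hU.measurable n)).sub_const _).mul_const _
  have hY_indep : iIndepFun Y P :=
    hU.indep.comp (fun n (k : ℕ) => ((k : ℝ) - u n) * c n) fun _ => measurable_from_top
  have hY_int : Integrable (fun ω => exp (t * (∑ n ∈ s, Y n) ω)) P :=
    hY_indep.integrable_exp_mul_sum hY_meas fun n _ => integrable_comp_of_zero_or_one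
      (hU.measurable n) (hU.zero_or_one n) fun k => exp (t * ((k - u n) * c n))
  have hmgf : mgf (∑ n ∈ s, Y n) P t ≤ exp (t ^ 2 * ∑ n ∈ s, u n) := by
    rw [hY_indep.mgf_sum hY_meas, mul_sum, exp_sum]
    exact prod_le_prod (fun _ _ => mgf_nonneg) fun n _ =>
      hU.mgf_centered_mul_le n (hc n) (by positivity) (by rw [ht]; linarith)
  have hchernoff := measure_ge_le_exp_mul_mgf (ε * ∑ n ∈ s, u n) (by positivity : 0 ≤ t) hY_int
  rw [ENNReal.le_ofReal_iff_toReal_le (measure_ne_top _ _) (exp_pos _).le]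
  calc (P {ω | ε * ∑ n ∈ s, u n ≤ ∑ n ∈ s, ((U n ω : ℝ) - u n) * c n}).toReal
      = P.real {ω | ε * ∑ n ∈ s, u n ≤ (∑ n ∈ s, Y n) ω} := by simp [Y, measureReal_def]
    _ ≤ exp (-t * (ε * ∑ n ∈ s, u n)) * exp (t ^ 2 * ∑ n ∈ s, u n) :=
        hchernoff.trans (by gcongr)
    _ = exp (-(ε ^ 2) * (∑ n ∈ s, u n) / 4) := by rw [← exp_add, ht]; ring_nf

lemma measure_le_abs_sum_le (hU : IsIndepBernoulli P U u) (s : Finset ℕ) {c : ℕ → ℝ}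
    (hc : ∀ n, |c n| ≤ 1) {ε : ℝ} (hε0 : 0 ≤ ε) (hε2 : ε ≤ 2) :
    P {ω | ε * ∑ n ∈ s, u n ≤ |∑ n ∈ s, ((U n ω : ℝ) - u n) * c n|}
      ≤ ENNReal.ofReal (2 * exp (-(ε ^ 2) * (∑ n ∈ s, u n) / 4)) := by
  have hsplit : {ω | ε * ∑ n ∈ s, u n ≤ |∑ n ∈ s, ((U n ω : ℝ) - u n) * c n|}
      = {ω | ε * ∑ n ∈ s, u n ≤ ∑ n ∈ s, ((U n ω : ℝ) - u n) * c n}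
        ∪ {ω | ε * ∑ n ∈ s, u n ≤ ∑ n ∈ s, ((U n ω : ℝ) - u n) * -c n} := by
    ext ω
    simp only [Set.mem_ofPred_eq, Set.mem_union, le_abs, mul_neg, sum_neg_distrib]
  rw [hsplit, two_mul, ENNReal.ofReal_add (exp_pos _).le (exp_pos _).le]
  exact (measure_union_le _ _).trans (add_le_add (hU.measure_le_sum_le s hc hε0 hε2)
    (hU.measure_le_sum_le s (fun n => (abs_neg (c n)).trans_le (hc n)) hε0 hε2))

end IsIndepBernoulli

lemma card_filter_modEq_le (M r : ℕ) {q : ℕ} (hq : 0 < q) :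
    (#{x ∈ range M | x ≡ r [MOD q]} : ℝ) ≤ M / q + 1 := by
  rw [← Nat.count_eq_card_filter_range, Nat.count_modEq_card _ hq]
  push_cast
  gcongr
  · exact Nat.cast_div_le
  · split_ifs <;> norm_num

lemma card_filter_add_modEq_le_one {q₁ q₂ : ℕ} (hcop : q₁.Coprime q₂) (b₁ b₂ r₁ r₂ : ℕ) :
    #{a ∈ range (q₁ * q₂) | a + b₁ ≡ r₁ [MOD q₁] ∧ a + b₂ ≡ r₂ [MOD q₂]} ≤ 1 := by
  refine card_le_one.2 fun a ha a' ha' => ?_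
  simp only [mem_filter, mem_range] at ha ha'
  have h₁ : a ≡ a' [MOD q₁] := Nat.ModEq.add_right_cancel' b₁ (ha.2.1.trans ha'.2.1.symm)
  have h₂ : a ≡ a' [MOD q₂] := Nat.ModEq.add_right_cancel' b₂ (ha.2.2.trans ha'.2.2.symm)
  exact ((Nat.modEq_and_modEq_iff_modEq_mul hcop).1 ⟨h₁, h₂⟩).eq_of_lt_of_lt ha.1 ha'.1

lemma abs_sum_indicator_mul_le_one {q₁ q₂ r₁ r₂ : ℕ} (hcop : q₁.Coprime q₂)
    {s₀ s₁ s₂ : Finset ℕ} (hs₁ : ∀ x ∈ s₁, x ≡ r₁ [MOD q₁]) (hs₂ : ∀ x ∈ s₂, x ≡ r₂ [MOD q₂])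
    (n : ℕ) :
    |∑ a ∈ range (q₁ * q₂), (s₀ : Set ℕ).indicator (1 : ℕ → ℝ) a *
      (s₁ : Set ℕ).indicator 1 (a + n) * (s₂ : Set ℕ).indicator 1 (a + 2 * n)| ≤ 1 := by
  classical
  have hterm : ∀ a, (s₀ : Set ℕ).indicator (1 : ℕ → ℝ) a * (s₁ : Set ℕ).indicator 1 (a + n) *
      (s₂ : Set ℕ).indicator 1 (a + 2 * n) =
        if a ∈ s₀ ∧ a + n ∈ s₁ ∧ a + 2 * n ∈ s₂ then 1 else 0 := by
    intro a
    simp only [Set.indicator_apply, mem_coe, Pi.one_apply]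
    split_ifs <;> simp_all
  rw [sum_congr rfl fun a _ => hterm a, sum_boole, abs_of_nonneg (Nat.cast_nonneg _),
    Nat.cast_le_one]
  refine (card_le_card fun a ha => ?_).trans (card_filter_add_modEq_le_one hcop n (2 * n) r₁ r₂)
  simp only [mem_filter] at ha ⊢
  exact ⟨ha.1, hs₁ _ ha.2.2.1, hs₂ _ ha.2.2.2⟩

lemma exists_subset_eq_indicator {α M : Type*} [Zero M] [One M] {g : α → M}
    (h01 : ∀ x, g x = 0 ∨ g x = 1) {I : Finset α} (hI : ∀ x, g x ≠ 0 → x ∈ I) :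
    ∃ s ⊆ I, g = (s : Set α).indicator 1 := by
  classical
  refine ⟨{x ∈ I | g x ≠ 0}, filter_subset _ _, funext fun x => ?_⟩
  by_cases hx : g x = 0
  · simp [hx]
  · rw [Set.indicator_of_mem (by simpa using ⟨hI x hx, hx⟩), (h01 x).resolve_left hx]
    rfl

lemma exists_subset_filter_modEq_eq_indicator {g : ℕ → ℝ} (h01 : ∀ x, g x = 0 ∨ g x = 1)
    {M q r : ℕ} (hg : ∀ x, g x ≠ 0 → x < M ∧ x % q = r) :
    ∃ s ⊆ {x ∈ range M | x ≡ r [MOD q]}, g = (s : Set ℕ).indicator 1 :=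
  exists_subset_eq_indicator h01 fun x hx =>
    mem_filter.2 ⟨mem_range.2 (hg x hx).1, ((hg x hx).2 ▸ Nat.mod_modEq x q).symm⟩

lemma measure_le_card_mul_of_subset_biUnion {Ω ι : Type*} [MeasurableSpace Ω] {P : Measure Ω}
    {A : Set Ω} {s : Finset ι} {E : ι → Set Ω} {b : ℝ} (hA : A ⊆ ⋃ i ∈ s, E i)
    (hE : ∀ i ∈ s, P (E i) ≤ ENNReal.ofReal b) : P A ≤ ENNReal.ofReal (#s * b) := by
  rw [ENNReal.ofReal_mul (Nat.cast_nonneg _), ENNReal.ofReal_natCast, ← nsmul_eq_mul,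
    ← sum_const]
  exact (measure_mono hA).trans ((measure_biUnion_finset_le _ _).trans (sum_le_sum hE))

lemma mul_le_abs_of_lt_abs_one_div_mul {ε S T : ℝ} (hε : 0 ≤ ε) (hS : 0 ≤ S)
    (h : ε < |1 / S * T|) : ε * S ≤ |T| := by
  rcases hS.eq_or_lt with rfl | hS
  · -- `1 / 0 = 0` in Lean, so here `h` says `ε < 0`.
    simp only [div_zero, zero_mul, abs_zero] at h
    linarith
  · rw [abs_mul, abs_of_pos (one_div_pos.2 hS), one_div_mul_eq_div, lt_div_iff₀ hS] at h
    exact h.le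

lemma card_powerset_product_mul_two_le {α β γ : Type*} {A : Finset α} {B : Finset β}
    {C : Finset γ} {a b c : ℝ} (hA : (#A : ℝ) ≤ a) (hB : (#B : ℝ) ≤ b) (hC : (#C : ℝ) ≤ c) :
    (#(A.powerset ×ˢ B.powerset ×ˢ C.powerset) : ℝ) * 2 ≤ 2 ^ (a + b + c + 1) := by
  rw [card_product, card_product, card_powerset, card_powerset, card_powerset,
    rpow_add two_pos, rpow_add two_pos, rpow_add two_pos, rpow_one]
  calc ((2 ^ #A * (2 ^ #B * 2 ^ #C) : ℕ) : ℝ) * 2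
      = 2 ^ (#A : ℝ) * 2 ^ (#B : ℝ) * 2 ^ (#C : ℝ) * 2 := by push_cast [rpow_natCast]; ring
    _ ≤ 2 ^ a * 2 ^ b * 2 ^ c * 2 := by gcongr <;> norm_num

theorem stmt15_general
    {Ω : Type*} [MeasurableSpace Ω] (P : Measure Ω) [IsProbabilityMeasure P]
    (u : ℕ → ℝ) (hu_pos : ∀ n, 0 < u n)
    (U : ℕ → Ω → ℕ) (hU_meas : ∀ n, Measurable (U n))
    (hU01 : ∀ n ω, U n ω = 0 ∨ U n ω = 1)
    (hU_indep : ProbabilityTheory.iIndepFun U P)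
    (hU_law : ∀ n, P {ω | U n ω = 1} = ENNReal.ofReal (u n))
    (N Q q₁ q₂ : ℕ) (hq₁ : 1 ≤ q₁) (hq₂ : 1 ≤ q₂)
    (hcop : Nat.Coprime q₁ q₂) (hQ : q₁ * q₂ = Q)
    (r₁ r₂ : ℕ)
    (ε : ℝ) (hε0 : 0 < ε) (hε1 : ε < 1) :
    P {ω | ∃ g₀ g₁ g₂ : ℕ → ℝ,
        (∀ a, g₀ a = 0 ∨ g₀ a = 1) ∧ (∀ a, Q ≤ a → g₀ a = 0) ∧
        (∀ x, g₁ x = 0 ∨ g₁ x = 1) ∧ (∀ x, g₁ x ≠ 0 → x < Q + N ∧ x % q₁ = r₁) ∧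
        (∀ x, g₂ x = 0 ∨ g₂ x = 1) ∧ (∀ x, g₂ x ≠ 0 → x < Q + 2 * N ∧ x % q₂ = r₂) ∧
        ε < |(1 / (∑ n ∈ Finset.range N, u n : ℝ)) *
          ∑ n ∈ Finset.range N, ((U n ω : ℝ) - u n) *
            ∑ a ∈ Finset.range Q, g₀ a * g₁ (a + n) * g₂ (a + 2 * n)|} ≤
      ENNReal.ofReal
        ((2 : ℝ) ^ ((Q : ℝ) + ((Q : ℝ) + N) / q₁ + ((Q : ℝ) + 2 * N) / q₂ + 3) *
          Real.exp (-(ε ^ 2) * (∑ n ∈ Finset.range N, u n) / 4)) := by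
  classical
  subst hQ
  have hU : IsIndepBernoulli P U u := ⟨hU_meas, hU01, hU_indep, fun n => (hu_pos n).le, hU_law⟩
  set S := ∑ n ∈ range N, u n
  set I₁ := {x ∈ range (q₁ * q₂ + N) | x ≡ r₁ [MOD q₁]}
  set I₂ := {x ∈ range (q₁ * q₂ + 2 * N) | x ≡ r₂ [MOD q₂]}
  set ι := (range (q₁ * q₂)).powerset ×ˢ I₁.powerset ×ˢ I₂.powerset
  let E (p : Finset ℕ × Finset ℕ × Finset ℕ) : Set Ω :=
    {ω | ε * S ≤ |∑ n ∈ range N, ((U n ω : ℝ) - u n) * ∑ a ∈ range (q₁ * q₂),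
      (p.1 : Set ℕ).indicator 1 a * (p.2.1 : Set ℕ).indicator 1 (a + n) *
        (p.2.2 : Set ℕ).indicator 1 (a + 2 * n)|}
  have hcard : (#ι : ℝ) * 2
      ≤ 2 ^ (((q₁ * q₂ : ℕ) : ℝ) + ((q₁ * q₂ : ℕ) + N) / q₁ + ((q₁ * q₂ : ℕ) + 2 * N) / q₂ + 3) :=
    (card_powerset_product_mul_two_le (by rw [card_range]) (card_filter_modEq_le _ _ hq₁)
      (card_filter_modEq_le _ _ hq₂)).trans_eq (by push_cast; ring_nf)
  refine (measure_le_card_mul_of_subset_biUnion (E := E) (b := 2 * exp (-(ε ^ 2) * S / 4)) ?_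
    fun p hp => ?_).trans (ENNReal.ofReal_le_ofReal (by rw [← mul_assoc]; gcongr))
  · rintro ω ⟨g₀, g₁, g₂, h₀, h₀Q, h₁, h₁I, h₂, h₂I, hω⟩
    obtain ⟨s₀, hs₀, rfl⟩ := exists_subset_eq_indicator h₀ (I := range (q₁ * q₂))
      fun a ha => mem_range.2 (not_le.1 (mt (h₀Q a) ha))
    obtain ⟨s₁, hs₁, rfl⟩ := exists_subset_filter_modEq_eq_indicator h₁ h₁I
    obtain ⟨s₂, hs₂, rfl⟩ := exists_subset_filter_modEq_eq_indicator h₂ h₂I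
    have hs : (s₀, s₁, s₂) ∈ ι :=
      mem_product.2 ⟨mem_powerset.2 hs₀, mem_product.2 ⟨mem_powerset.2 hs₁, mem_powerset.2 hs₂⟩⟩
    exact Set.mem_biUnion hs
      (mul_le_abs_of_lt_abs_one_div_mul hε0.le (sum_nonneg fun n _ => (hu_pos n).le) hω)
  · simp only [ι, mem_product, mem_powerset] at hp
    exact hU.measure_le_abs_sum_le _ (abs_sum_indicator_mul_le_one hcop
      (fun x hx => (mem_filter.1 (hp.2.1 hx)).2) (fun x hx => (mem_filter.1 (hp.2.2 hx)).2))
      hε0.le (by linarith)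

/-- With `q₁, q₂` coprime, `q₁ q₂ = Q`, and residues `r₁ < q₁`, `r₂ < q₂`, the
probability that, for **some** choice of a `{0,1}`-valued `g₀` supported on `[0,Q)` and
`{0,1}`-valued `g₁, g₂` supported on `[0, Q+N)`, `[0, Q+2N)` and on the residue classes
`r₁ (mod q₁)`, `r₂ (mod q₂)` respectively, the average
`(1/S) ∑_{n<N} (U n - u n) ∑_{a<Q} g₀(a) g₁(a+n) g₂(a+2n)` exceeds `ε` in absolute
value, is at most `2^{Q + (Q+N)/q₁ + (Q+2N)/q₂ + 3} · exp(-ε² S / 4)`. -/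
theorem stmt15
    {Ω : Type*} [MeasurableSpace Ω] (P : Measure Ω) [IsProbabilityMeasure P]
    (u : ℕ → ℝ) (hu_pos : ∀ n, 0 < u n) (hu_le : ∀ n, u n ≤ 1)
    (U : ℕ → Ω → ℕ) (hU_meas : ∀ n, Measurable (U n))
    (hU01 : ∀ n ω, U n ω = 0 ∨ U n ω = 1)
    (hU_indep : ProbabilityTheory.iIndepFun U P)
    (hU_law : ∀ n, P {ω | U n ω = 1} = ENNReal.ofReal (u n))
    (N Q q₁ q₂ : ℕ) (hN : 1 ≤ N) (hq₁ : 1 ≤ q₁) (hq₂ : 1 ≤ q₂)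
    (hcop : Nat.Coprime q₁ q₂) (hQ : q₁ * q₂ = Q)
    (r₁ r₂ : ℕ) (hr₁ : r₁ < q₁) (hr₂ : r₂ < q₂)
    (ε : ℝ) (hε0 : 0 < ε) (hε1 : ε < 1) :
    P {ω | ∃ g₀ g₁ g₂ : ℕ → ℝ,
        (∀ a, g₀ a = 0 ∨ g₀ a = 1) ∧ (∀ a, Q ≤ a → g₀ a = 0) ∧
        (∀ x, g₁ x = 0 ∨ g₁ x = 1) ∧ (∀ x, g₁ x ≠ 0 → x < Q + N ∧ x % q₁ = r₁) ∧
        (∀ x, g₂ x = 0 ∨ g₂ x = 1) ∧ (∀ x, g₂ x ≠ 0 → x < Q + 2 * N ∧ x % q₂ = r₂) ∧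
        ε < |(1 / (∑ n ∈ Finset.range N, u n : ℝ)) *
          ∑ n ∈ Finset.range N, ((U n ω : ℝ) - u n) *
            ∑ a ∈ Finset.range Q, g₀ a * g₁ (a + n) * g₂ (a + 2 * n)|} ≤
      ENNReal.ofReal
        ((2 : ℝ) ^ ((Q : ℝ) + ((Q : ℝ) + N) / q₁ + ((Q : ℝ) + 2 * N) / q₂ + 3) *
          Real.exp (-(ε ^ 2) * (∑ n ∈ Finset.range N, u n) / 4)) :=
  stmt15_general P u hu_pos U hU_meas hU01 hU_indep hU_law N Q q₁ q₂ hq₁ hq₂ hcop hQ r₁ r₂ ε hε0 hε1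
end

section
/- (Summation by parts, liminf comparison.) Let w_1 ≥ w_2 ≥ w_3 ≥ ⋯ ≥ 0 be a non-increasing sequence of nonnegative reals with ∑_n w_n = ∞, and let (a_n) be a sequence of reals with 0 ≤ a_n ≤ 1. Then liminf_{N→∞} (∑_{n<N} w_n a_n) / (∑_{n<N} w_n) ≥ liminf_{N→∞} (1/N) ∑_{n<N} a_n. -/
open Filter Finset

lemma abel_lb (w : ℕ → ℝ) (hw0 : ∀ n, 0 ≤ w n) (hwa : ∀ n, w (n+1) ≤ w n)
    (b : ℕ → ℝ) (C : ℝ) (hC : ∀ N, -C ≤ ∑ n ∈ Finset.Ico 1 N, b n) (N : ℕ) :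
    -(C * w 1) ≤ ∑ n ∈ Finset.Ico 1 N, w n * b n := by
  have hC0 : 0 ≤ C := by have := hC 1; simpa using this
  cases N with
  | zero => rw [Finset.Ico_eq_empty (by omega), Finset.sum_empty]; nlinarith [mul_nonneg hC0 (hw0 1)]
  | succ m =>
    set f : ℕ → ℝ := fun i => w (1 + i) with hf
    set g : ℕ → ℝ := fun i => b (1 + i) with hg
    have hsum : ∑ n ∈ Finset.Ico 1 (m+1), w n * b n = ∑ i ∈ range m, f i * g i := by
      rw [Finset.sum_Ico_eq_sum_range]; simp [hf, hg]
    have hG : ∀ k, ∑ i ∈ range k, g i = ∑ n ∈ Finset.Ico 1 (k+1), b n := by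
      intro k; rw [Finset.sum_Ico_eq_sum_range]; simp [hg]
    have hGlb : ∀ k, -C ≤ ∑ i ∈ range k, g i := fun k => (hG k) ▸ hC (k+1)
    have hfanti : ∀ i j, i ≤ j → f j ≤ f i := by
      intro i j hij
      exact (antitone_nat_of_succ_le (fun n => hwa n)) (by omega)
    have hf0 : ∀ i, 0 ≤ f i := fun i => hw0 _
    rw [hsum]
    have hparts := Finset.sum_range_by_parts f g m
    simp only [smul_eq_mul] at hparts
    rw [hparts]
    have h1 : -C * f (m-1) ≤ f (m-1) * ∑ i ∈ range m, g i := by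
      have := hGlb m
      nlinarith [hf0 (m-1)]
    have h2 : ∑ i ∈ range (m-1), (f (i+1) - f i) * ∑ j ∈ range (i+1), g j
        ≤ ∑ i ∈ range (m-1), (f (i+1) - f i) * (-C) := by
      apply Finset.sum_le_sum
      intro i _
      have hle : f (i+1) - f i ≤ 0 := by have := hfanti i (i+1) (by omega); linarith
      have := hGlb (i+1)
      nlinarith
    have h3 : ∑ i ∈ range (m-1), (f (i+1) - f i) * (-C) = (f (m-1) - f 0) * (-C) := by
      rw [← Finset.sum_mul, Finset.sum_range_sub]
    have hf01 : f 0 = w 1 := by simp [hf]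
    nlinarith [h2, h3 ▸ h2]

/-- **Summation by parts, liminf comparison.**  If `w₁ ≥ w₂ ≥ ⋯ ≥ 0` with `∑ w n = ∞`
and `0 ≤ a n ≤ 1`, then
`liminf_N (∑_{n<N} w n · a n)/(∑_{n<N} w n) ≥ liminf_N (1/N) ∑_{n<N} a n`
(sums over `1 ≤ n < N`). -/
theorem stmt16
    (w : ℕ → ℝ) (hw_nonneg : ∀ n, 0 ≤ w n) (hw_anti : ∀ n, w (n + 1) ≤ w n)
    (hw_div : Tendsto (fun N : ℕ => ∑ n ∈ Finset.Ico 1 N, w n) atTop atTop)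
    (a : ℕ → ℝ) (ha0 : ∀ n, 0 ≤ a n) (ha1 : ∀ n, a n ≤ 1) :
    Filter.liminf (fun N : ℕ => (∑ n ∈ Finset.Ico 1 N, a n) / N) atTop ≤
      Filter.liminf
        (fun N : ℕ =>
          (∑ n ∈ Finset.Ico 1 N, w n * a n) / (∑ n ∈ Finset.Ico 1 N, w n))
        atTop := by
  set A : ℕ → ℝ := fun N => ∑ n ∈ Finset.Ico 1 N, a n with hAdef
  set W : ℕ → ℝ := fun N => ∑ n ∈ Finset.Ico 1 N, w n with hWdef
  set S : ℕ → ℝ := fun N => ∑ n ∈ Finset.Ico 1 N, w n * a n with hSdef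
  have hA0 : ∀ N, 0 ≤ A N := fun N => Finset.sum_nonneg fun n _ => ha0 n
  have hS0 : ∀ N, 0 ≤ S N :=
    fun N => Finset.sum_nonneg fun n _ => mul_nonneg (hw_nonneg n) (ha0 n)
  have hSW : ∀ N, S N ≤ W N := by
    intro N
    apply Finset.sum_le_sum
    intro n _
    nlinarith [hw_nonneg n, ha1 n, ha0 n]
  have hWev : ∀ᶠ N in atTop, (1:ℝ) ≤ W N := hw_div.eventually_ge_atTop 1
  -- coboundedness of RHS
  have hcobdd : IsCoboundedUnder (· ≥ ·) atTop (fun N => S N / W N) := by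
    apply isCoboundedUnder_ge_of_eventually_le atTop (x := 1)
    filter_upwards [hWev] with N hN
    rw [div_le_one (by linarith)]
    exact hSW N
  refine le_of_forall_lt fun c hc => ?_
  set L := Filter.liminf (fun N : ℕ => A N / N) atTop with hL
  set lam := (c + L) / 2 with hlamdef
  have hclam : c < lam := by
    rw [hlamdef]; linarith
  have hlamL : lam < L := by rw [hlamdef]; linarith
  have hbd : IsBoundedUnder (· ≥ ·) atTop (fun N : ℕ => A N / N) :=
    isBoundedUnder_of ⟨0, fun N => div_nonneg (hA0 N) (Nat.cast_nonneg N)⟩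
  have hev : ∀ᶠ N in atTop, lam < A N / N := eventually_lt_of_lt_liminf hlamL hbd
  obtain ⟨N0, hN0⟩ := (eventually_atTop).mp hev
  set C : ℝ := |lam| * (N0 + 1) with hCdef
  have hC0 : 0 ≤ C := by positivity
  -- partial sum lower bound for b n = a n - lam
  have hB : ∀ N, -C ≤ ∑ n ∈ Finset.Ico 1 N, (a n - lam) := by
    intro N
    have hsum : ∑ n ∈ Finset.Ico 1 N, (a n - lam) = A N - lam * ((N - 1 : ℕ) : ℝ) := by
      rw [Finset.sum_sub_distrib, Finset.sum_const, Nat.card_Ico]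
      simp [hAdef, mul_comm]
    rw [hsum]
    rcases Nat.eq_zero_or_pos N with h0 | hNp
    · subst h0
      simp only [hAdef]
      rw [Finset.Ico_eq_empty (by omega), Finset.sum_empty]
      norm_num
      linarith
    rcases le_or_gt N0 N with hN | hN
    · -- large N : A N > lam * N
      have h1 : lam < A N / N := hN0 N hN
      have hNpos : (0:ℝ) < N := by exact_mod_cast hNp
      have h2 : lam * N < A N := by
        rw [lt_div_iff₀ hNpos] at h1; linarith
      have hcast : ((N - 1 : ℕ) : ℝ) = (N : ℝ) - 1 := by
        rw [Nat.cast_sub hNp]; simp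
      rw [hcast]
      nlinarith [le_abs_self lam, neg_abs_le lam, abs_nonneg lam, (by positivity : (0:ℝ) ≤ |lam| * (N0:ℝ))]
    · -- small N
      have hx0 : (0:ℝ) ≤ ((N - 1 : ℕ) : ℝ) := Nat.cast_nonneg _
      have hx1 : ((N - 1 : ℕ) : ℝ) ≤ (N0 : ℝ) := by
        exact_mod_cast Nat.cast_le.mpr (by omega : N - 1 ≤ N0)
      nlinarith [hA0 N, le_abs_self lam, abs_nonneg lam]
  have hkey : ∀ N, -(C * w 1) ≤ S N - lam * W N := by
    intro N
    have := abel_lb w hw_nonneg hw_anti (fun n => a n - lam) C hB N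
    have heq : ∑ n ∈ Finset.Ico 1 N, w n * (a n - lam) = S N - lam * W N := by
      rw [hSdef, hWdef]
      rw [Finset.mul_sum, ← Finset.sum_sub_distrib]
      apply Finset.sum_congr rfl
      intro n _; ring
    linarith [heq ▸ this]
  -- comparison sequence
  set g : ℕ → ℝ := fun N => lam - (C * w 1) / W N with hgdef
  have hg_tendsto : Tendsto g atTop (nhds lam) := by
    have h0 : Tendsto (fun N => (C * w 1) / W N) atTop (nhds 0) :=
      Tendsto.div_atTop tendsto_const_nhds hw_div
    have := ((tendsto_const_nhds : Tendsto (fun _ : ℕ => lam) atTop (nhds lam)).sub h0)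
    simpa using this
  have hfg : ∀ᶠ N in atTop, g N ≤ S N / W N := by
    filter_upwards [hWev] with N hN
    have hWpos : (0:ℝ) < W N := by linarith
    rw [hgdef]
    rw [le_div_iff₀ hWpos]
    have hWne : W N ≠ 0 := ne_of_gt hWpos
    have : (lam - C * w 1 / W N) * W N = lam * W N - C * w 1 := by field_simp
    rw [this]
    linarith [hkey N]
  calc c < lam := hclam
    _ = Filter.liminf g atTop := (hg_tendsto.liminf_eq).symm
    _ ≤ Filter.liminf (fun N => S N / W N) atTop :=
        liminf_le_liminf hfg hg_tendsto.isBoundedUnder_ge hcobdd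
end

section
/- (Lacunary subsequence trick.) Let (u_n) be a non-increasing sequence with 0 < u_n ≤ 1 and ∑_n u_n = ∞, let U_n ∈ {0,1} be a {0,1}-valued sequence with (∑_{n<N} U_n)/(∑_{n<N} u_n) → 1 as N → ∞, and let (G_n) be reals with |G_n| ≤ 1. Fix σ > 1 and for each i ≥ 1 let N_i be the smallest N with ∑_{n<N} u_n ≥ σ^i. If lim_{i→∞} (1/∑_{n<N_i} u_n) ∑_{n<N_i} (U_n − u_n) G_n = 0, then limsup_{N→∞} | (1/∑_{n<N} u_n) ∑_{n<N} (U_n − u_n) G_n | ≤ 4(σ − 1). -/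
open Filter Finset

/-- **Lacunary subsequence trick.**  Let `(u n)` be non-increasing with `0 < u n ≤ 1`
and `∑ u n = ∞`, let `U n ∈ {0,1}` with `(∑_{n<N} U n)/(∑_{n<N} u n) → 1`, and let
`|G n| ≤ 1`.  Fix `σ > 1` and let `N i` be the least `N` with `∑_{n<N} u n ≥ σ^i`.
If the normalized sums `(1/∑_{n<N i} u n) ∑_{n<N i} (U n - u n) G n` tend to `0` along
the subsequence, then
`limsup_N |(1/∑_{n<N} u n) ∑_{n<N} (U n - u n) G n| ≤ 4(σ - 1)`. -/
theorem stmt19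
    (u : ℕ → ℝ) (hu_anti : Antitone u) (hu_pos : ∀ n, 0 < u n) (hu_le : ∀ n, u n ≤ 1)
    (hu_div : Tendsto (fun N : ℕ => ∑ n ∈ Finset.range N, u n) atTop atTop)
    (U : ℕ → ℝ) (hU01 : ∀ n, U n = 0 ∨ U n = 1)
    (hU_slln : Tendsto
      (fun N : ℕ => (∑ n ∈ Finset.range N, U n) / (∑ n ∈ Finset.range N, u n))
      atTop (nhds 1))
    (G : ℕ → ℝ) (hG : ∀ n, |G n| ≤ 1)
    (σ : ℝ) (hσ : 1 < σ)
    (N : ℕ → ℕ)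
    (hN : ∀ i : ℕ, σ ^ i ≤ ∑ n ∈ Finset.range (N i), u n ∧
      ∀ M : ℕ, M < N i → ∑ n ∈ Finset.range M, u n < σ ^ i)
    (hsub : Tendsto
      (fun i : ℕ =>
        (∑ n ∈ Finset.range (N i), (U n - u n) * G n) /
          (∑ n ∈ Finset.range (N i), u n))
      atTop (nhds 0)) :
    Filter.limsup
        (fun M : ℕ =>
          |(∑ n ∈ Finset.range M, (U n - u n) * G n) / (∑ n ∈ Finset.range M, u n)|)
        atTop ≤ 4 * (σ - 1) := by
  set S : ℕ → ℝ := fun M => ∑ n ∈ Finset.range M, u n with hSdef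
  set W : ℕ → ℝ := fun M => ∑ n ∈ Finset.range M, U n with hWdef
  set T : ℕ → ℝ := fun M => ∑ n ∈ Finset.range M, (U n - u n) * G n with hTdef
  have hσ0 : (0:ℝ) < σ := lt_trans one_pos hσ
  have hU0 : ∀ n, 0 ≤ U n := fun n => by rcases hU01 n with h | h <;> rw [h] <;> norm_num
  have hSmono : Monotone S := fun a b hab =>
    Finset.sum_le_sum_of_subset_of_nonneg (Finset.range_subset_range.2 hab)
      (fun n _ _ => (hu_pos n).le)
  have hWmono : Monotone W := fun a b hab =>
    Finset.sum_le_sum_of_subset_of_nonneg (Finset.range_subset_range.2 hab)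
      (fun n _ _ => hU0 n)
  have hSN_pos : ∀ i, 0 < S (N i) := fun i =>
    lt_of_lt_of_le (pow_pos hσ0 i) (hN i).1
  have hSN_ne : ∀ i, S (N i) ≠ 0 := fun i => (hSN_pos i).ne'
  have hSle : ∀ i, σ ^ i ≤ S (N i) := fun i => (hN i).1
  -- upper bound on S (N i)
  have hSub : ∀ i, S (N i) ≤ σ ^ i + 1 := by
    intro i
    have hNi0 : N i ≠ 0 := by
      intro h
      have h1 := (hN i).1
      rw [h] at h1
      simp only [hSdef, Finset.range_zero, Finset.sum_empty] at h1
      have h2 : (1:ℝ) ≤ σ ^ i := one_le_pow₀ hσ.le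
      linarith
    obtain ⟨m, hm⟩ := Nat.exists_eq_succ_of_ne_zero hNi0
    have h1 : S m < σ ^ i := (hN i).2 m (by omega)
    have h2 : S (N i) = S m + u m := by
      rw [hm]; simp [hSdef, Finset.sum_range_succ]
    rw [h2]
    have := hu_le m
    linarith
  -- N is monotone
  have hNmono : Monotone N := by
    intro i j hij
    by_contra h
    push_neg at h
    have h1 : S (N j) < σ ^ i := (hN i).2 (N j) h
    have h2 : σ ^ i ≤ σ ^ j := pow_le_pow_right₀ hσ.le hij
    exact absurd (hSle j) (by linarith)
  -- N tends to infinity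
  have hNcast : ∀ i, σ ^ i ≤ (N i : ℝ) := by
    intro i
    refine le_trans (hSle i) ?_
    calc S (N i) ≤ ∑ _n ∈ Finset.range (N i), (1:ℝ) :=
          Finset.sum_le_sum fun n _ => hu_le n
      _ = (N i : ℝ) := by simp
  have hNtop : Tendsto N atTop atTop := by
    rw [← tendsto_natCast_atTop_iff (R := ℝ)]
    exact tendsto_atTop_mono hNcast (tendsto_pow_atTop_atTop_of_one_lt hσ)
  have hNtop' : Tendsto (fun i => N (i + 1)) atTop atTop :=
    hNtop.comp (tendsto_add_atTop_nat 1)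
  -- the ratio S(N(i+1))/S(N i) tends to σ
  have hxpow : Tendsto (fun i : ℕ => σ⁻¹ ^ i) atTop (nhds 0) :=
    tendsto_pow_atTop_nhds_zero_of_lt_one (by positivity)
      (by rw [inv_lt_one₀ hσ0]; exact hσ)
  have hpow_ne : ∀ i : ℕ, σ ^ i ≠ 0 := fun i => (pow_pos hσ0 i).ne'
  have hlow : Tendsto (fun i : ℕ => σ ^ (i+1) / (σ ^ i + 1)) atTop (nhds σ) := by
    have heq : (fun i : ℕ => σ ^ (i+1) / (σ ^ i + 1))
        = fun i : ℕ => σ / (1 + σ⁻¹ ^ i) := by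
      funext i
      rw [inv_pow]
      have h1 : σ ^ i + 1 > 0 := by positivity
      field_simp
      ring
    rw [heq]
    have : Tendsto (fun i : ℕ => σ / (1 + σ⁻¹ ^ i)) atTop (nhds (σ / (1 + 0))) :=
      tendsto_const_nhds.div (tendsto_const_nhds.add hxpow) (by norm_num)
    simpa using this
  have hup : Tendsto (fun i : ℕ => (σ ^ (i+1) + 1) / σ ^ i) atTop (nhds σ) := by
    have heq : (fun i : ℕ => (σ ^ (i+1) + 1) / σ ^ i)
        = fun i : ℕ => σ + σ⁻¹ ^ i := by
      funext i
      rw [inv_pow]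
      field_simp
      ring
    rw [heq]
    simpa using tendsto_const_nhds.add hxpow
  have hR : Tendsto (fun i => S (N (i+1)) / S (N i)) atTop (nhds σ) := by
    refine tendsto_of_tendsto_of_tendsto_of_le_of_le hlow hup ?_ ?_
    · intro i
      exact div_le_div₀ (hSN_pos (i+1)).le (hSle (i+1)) (hSN_pos i) (hSub i)
    · intro i
      exact div_le_div₀ (by positivity) (hSub (i+1)) (pow_pos hσ0 i) (hSle i)
  -- the sum ratios along the subsequence
  have hq : Tendsto (fun i => W (N i) / S (N i)) atTop (nhds 1) := hU_slln.comp hNtop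
  have hq' : Tendsto (fun i => W (N (i+1)) / S (N (i+1))) atTop (nhds 1) :=
    hU_slln.comp hNtop'
  have ha : Tendsto (fun i => |T (N i)| / S (N i)) atTop (nhds 0) := by
    have := hsub.abs
    rw [abs_zero] at this
    refine this.congr fun i => ?_
    rw [abs_div, abs_of_pos (hSN_pos i)]
  -- the key quantity F
  set F : ℕ → ℝ := fun i =>
    (|T (N i)| + (W (N (i+1)) - W (N i)) + (S (N (i+1)) - S (N i))) / S (N i) with hFdef
  have hF : Tendsto F atTop (nhds (2 * σ - 2)) := by
    have heq : F = fun i =>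
        |T (N i)| / S (N i)
          + ((W (N (i+1)) / S (N (i+1))) * (S (N (i+1)) / S (N i)) - W (N i) / S (N i))
          + (S (N (i+1)) / S (N i) - 1) := by
      funext i
      rw [hFdef]
      field_simp [hSN_ne i, hSN_ne (i+1)]
    rw [heq]
    have : Tendsto (fun i =>
        |T (N i)| / S (N i)
          + ((W (N (i+1)) / S (N (i+1))) * (S (N (i+1)) / S (N i)) - W (N i) / S (N i))
          + (S (N (i+1)) / S (N i) - 1)) atTop
        (nhds (0 + (1 * σ - 1) + (σ - 1))) :=
      (ha.add ((hq'.mul hR).sub hq)).add (hR.sub tendsto_const_nhds)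
    convert this using 2
    ring
  have hF4 : ∀ᶠ i in atTop, F i < 4 * (σ - 1) :=
    hF.eventually_lt_const (by nlinarith)
  rw [eventually_atTop] at hF4
  obtain ⟨I, hI⟩ := hF4
  -- main eventual bound
  have key : ∀ᶠ M in atTop, |T M / S M| ≤ 4 * (σ - 1) := by
    filter_upwards [eventually_ge_atTop (N I)] with M hM
    obtain ⟨B, hB⟩ := (hNtop.eventually_gt_atTop M).exists
    have hIB : I ≤ B := by
      by_contra h
      push_neg at h
      exact absurd (le_trans (hNmono h.le) hM) (not_le.2 hB)
    set i : ℕ := Nat.findGreatest (fun j => N j ≤ M) B with hidef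
    have hiM : N i ≤ M := Nat.findGreatest_spec (P := fun j => N j ≤ M) (m := I) hIB hM
    have hIi : I ≤ i := Nat.le_findGreatest (P := fun j => N j ≤ M) hIB hM
    have hiB : i < B := by
      by_contra h
      push_neg at h
      exact absurd (le_trans (hNmono h) hiM) (not_le.2 hB)
    have hMi : M < N (i+1) := by
      have h := Nat.findGreatest_is_greatest (P := fun j => N j ≤ M)
        (Nat.lt_succ_self i) hiB
      exact lt_of_not_ge h
    -- estimate
    have hSM_pos : 0 < S M := lt_of_lt_of_le (hSN_pos i) (hSmono hiM)
    have habs : |T M| ≤ |T (N i)| + (W (N (i+1)) - W (N i)) + (S (N (i+1)) - S (N i)) := by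
      have hsplit : T M = T (N i) + ∑ n ∈ Finset.Ico (N i) M, (U n - u n) * G n := by
        simp only [hTdef]
        exact (Finset.sum_range_add_sum_Ico _ hiM).symm
      have hterm : ∀ n, |(U n - u n) * G n| ≤ U n + u n := by
        intro n
        rw [abs_mul]
        calc |U n - u n| * |G n| ≤ |U n - u n| * 1 :=
              mul_le_mul_of_nonneg_left (hG n) (abs_nonneg _)
          _ = |U n - u n| := mul_one _
          _ ≤ |U n| + |u n| := abs_sub _ _
          _ = U n + u n := by
              rw [abs_of_nonneg (hU0 n), abs_of_pos (hu_pos n)]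
      have h1 : |∑ n ∈ Finset.Ico (N i) M, (U n - u n) * G n|
          ≤ ∑ n ∈ Finset.Ico (N i) M, (U n + u n) :=
        (Finset.abs_sum_le_sum_abs _ _).trans
          (Finset.sum_le_sum fun n _ => hterm n)
      have h2 : ∑ n ∈ Finset.Ico (N i) M, (U n + u n)
          ≤ ∑ n ∈ Finset.Ico (N i) (N (i+1)), (U n + u n) := by
        refine Finset.sum_le_sum_of_subset_of_nonneg ?_ fun n _ _ => ?_
        · exact Finset.Ico_subset_Ico le_rfl hMi.le
        · have := hU0 n; have := (hu_pos n).le; linarith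
      have hNii : N i ≤ N (i+1) := hNmono (Nat.le_succ i)
      have h3 : ∑ n ∈ Finset.Ico (N i) (N (i+1)), (U n + u n)
          = (W (N (i+1)) - W (N i)) + (S (N (i+1)) - S (N i)) := by
        rw [Finset.sum_add_distrib]
        simp only [hWdef, hSdef]
        rw [Finset.sum_Ico_eq_sub _ hNii, Finset.sum_Ico_eq_sub _ hNii]
      calc |T M| ≤ |T (N i)| + |∑ n ∈ Finset.Ico (N i) M, (U n - u n) * G n| := by
            rw [hsplit]; exact abs_add_le _ _
        _ ≤ |T (N i)| + (W (N (i+1)) - W (N i)) + (S (N (i+1)) - S (N i)) := by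
            have := h1.trans (h2.trans_eq h3)
            linarith
    have hnum : (0:ℝ) ≤ |T (N i)| + (W (N (i+1)) - W (N i)) + (S (N (i+1)) - S (N i)) := by
      have h1 := abs_nonneg (T (N i))
      have h2 := hWmono (hNmono (Nat.le_succ i))
      have h3 := hSmono (hNmono (Nat.le_succ i))
      linarith
    calc |T M / S M| = |T M| / S M := by rw [abs_div, abs_of_pos hSM_pos]
      _ ≤ (|T (N i)| + (W (N (i+1)) - W (N i)) + (S (N (i+1)) - S (N i))) / S (N i) :=
          div_le_div₀ hnum habs (hSN_pos i) (hSmono hiM)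
      _ = F i := rfl
      _ ≤ 4 * (σ - 1) := (hI i hIi).le
  refine limsup_le_of_le ?_ key
  exact isCoboundedUnder_le_of_le atTop fun M => abs_nonneg _
end
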